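/- arXiv:math/0002020 — 7 statements merged into one kernel-verified Lean document; each statement's English description precedes it below -/
import Mathlib

section
/- Let Λ be a model set in ℝ^d arising from a cut and project scheme with window W. Then Λ is a Delone set: it is uniformly discrete and relatively dense in ℝ^d. -/
open scoped Pointwise
open Metric MeasureTheory Filter Topology

noncomputable section

abbrev Rd (d : ℕ) : Type := EuclideanSpace ℝ (Fin d)

/-- A set is uniformly discrete: distinct points are at distance at least `r` for some `r > 0`. -/
def UniformlyDiscrete {d : ℕ} (Λ : Set (Rd d)) : Prop :=
  ∃ r > 0, ∀ x ∈ Λ, ∀ y ∈ Λ, x ≠ y → r ≤ dist x y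

/-- A set is relatively dense: every closed ball of radius `R` meets it, for some `R > 0`. -/
def RelativelyDense {d : ℕ} (Λ : Set (Rd d)) : Prop :=
  ∃ R > 0, ∀ x : Rd d, ∃ y ∈ Λ, dist x y ≤ R

/-- A Delone set. -/
def IsDelone {d : ℕ} (Λ : Set (Rd d)) : Prop :=
  UniformlyDiscrete Λ ∧ RelativelyDense Λ

/-- The set Λ(W) obtained by cut and project from the lattice `Ltilde` and window `W`. -/
def cutProject {d : ℕ} {G : Type*} [AddCommGroup G]
    (Ltilde : AddSubgroup (Rd d × G)) (W : Set G) : Set (Rd d) :=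
  {x : Rd d | ∃ g : G, (x, g) ∈ Ltilde ∧ g ∈ W}

theorem modelSet_isDelone
    {d : ℕ} {G : Type*} [TopologicalSpace G] [AddCommGroup G] [IsTopologicalAddGroup G]
    [LocallyCompactSpace G] [T2Space G]
    (Ltilde : AddSubgroup (Rd d × G)) [DiscreteTopology Ltilde]
    [CompactSpace ((Rd d × G) ⧸ Ltilde)]
    (hinj : ∀ p ∈ Ltilde, ∀ q ∈ Ltilde, Prod.fst p = Prod.fst q → p = q)
    (hdense : Dense (Prod.snd '' (Ltilde : Set (Rd d × G))))
    (W : Set G) (hWne : W.Nonempty) (hWc : IsCompact W) (hWcl : W = closure (interior W))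
    (t : Rd d) (Λ : Set (Rd d)) (hΛ : Λ = (fun x => t + x) '' cutProject Ltilde W) :
    IsDelone Λ := by
  classical
  -- the interior of W is nonempty
  have hint : (interior W).Nonempty := by
    rcases hWne with ⟨w, hw⟩
    by_contra h
    rw [Set.not_nonempty_iff_eq_empty] at h
    rw [hWcl, h, closure_empty] at hw
    exact hw
  constructor
  · -- uniform discreteness
    -- the lattice is a closed subset
    have hclosed : IsClosed (Ltilde : Set (Rd d × G)) := by
      letI : UniformSpace (Rd d × G) := IsTopologicalAddGroup.rightUniformSpace _
      haveI : IsUniformAddGroup (Rd d × G) := isUniformAddGroup_of_addCommGroup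
      exact AddSubgroup.isClosed_of_discrete
    set K : Set (Rd d × G) := closedBall (0 : Rd d) 1 ×ˢ (W - W) with hKdef
    have hWW : IsCompact (W - W) := by
      rw [sub_eq_add_neg]; exact hWc.add hWc.neg
    have hKc : IsCompact K := (isCompact_closedBall _ _).prod hWW
    have hcomp : IsCompact ((Ltilde : Set (Rd d × G)) ∩ K) := hKc.inter_left hclosed
    haveI hdisc : DiscreteTopology ((Ltilde : Set (Rd d × G)) ∩ K : Set (Rd d × G)) :=
      DiscreteTopology.of_subset (inferInstance : DiscreteTopology Ltilde)
        Set.inter_subset_left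
    have hfin : ((Ltilde : Set (Rd d × G)) ∩ K).Finite := hcomp.finite (isDiscrete_iff_discreteTopology.mpr hdisc)
    set S : Finset (Rd d × G) := hfin.toFinset.filter (fun v => v ≠ 0) with hS
    set T : Finset ℝ := insert 1 (S.image fun v => ‖v.1‖) with hT
    have hTne : T.Nonempty := ⟨1, Finset.mem_insert_self _ _⟩
    set r := T.min' hTne with hr
    have hfst_ne : ∀ v ∈ S, v.1 ≠ 0 := by
      intro v hv h0
      rw [hS, Finset.mem_filter] at hv
      obtain ⟨hv1, hv2⟩ := hv
      rw [Set.Finite.mem_toFinset] at hv1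
      exact hv2 (hinj v hv1.1 0 Ltilde.zero_mem (by rw [h0]; rfl))
    have hrpos : 0 < r := by
      rw [hr, Finset.lt_min'_iff]
      intro y hy
      rw [hT, Finset.mem_insert] at hy
      rcases hy with rfl | hy
      · exact one_pos
      · obtain ⟨v, hv, rfl⟩ := Finset.mem_image.mp hy
        exact norm_pos_iff.mpr (hfst_ne v hv)
    have hr1 : r ≤ 1 := Finset.min'_le T 1 (Finset.mem_insert_self _ _)
    refine ⟨r, hrpos, ?_⟩
    rintro x hx y hy hxy
    rw [hΛ] at hx hy
    obtain ⟨a, ⟨ga, haL, hgaW⟩, rfl⟩ := hx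
    obtain ⟨b, ⟨gb, hbL, hgbW⟩, rfl⟩ := hy
    by_contra hlt
    push_neg at hlt
    have hdist : dist (t + a) (t + b) = ‖a - b‖ := by
      rw [dist_add_left, dist_eq_norm]
    set v : Rd d × G := ((a, ga) - (b, gb)) with hv
    have hvL : v ∈ Ltilde := Ltilde.sub_mem haL hbL
    have hv1 : v.1 = a - b := rfl
    have hvne : v ≠ 0 := by
      intro h0
      apply hxy
      have : a - b = 0 := by rw [← hv1, h0]; rfl
      have hab : a = b := sub_eq_zero.mp this
      rw [hab]
    have hvK : v ∈ K := by
      constructor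
      · rw [hv1, mem_closedBall_zero_iff]
        have : ‖a - b‖ < r := by rw [← hdist]; exact hlt
        linarith
      · exact Set.sub_mem_sub hgaW hgbW
    have hvS : v ∈ S := by
      rw [hS, Finset.mem_filter, Set.Finite.mem_toFinset]
      exact ⟨⟨hvL, hvK⟩, hvne⟩
    have : r ≤ ‖v.1‖ :=
      Finset.min'_le T _ (Finset.mem_insert_of_mem (Finset.mem_image_of_mem _ hvS))
    rw [hv1] at this
    rw [hdist] at hlt
    linarith
  · -- relative density
    set V : Set G := -(interior W) with hV
    have hVopen : IsOpen V := isOpen_interior.neg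
    have hVne : V.Nonempty := by
      obtain ⟨w, hw⟩ := hint
      exact ⟨-w, by simpa [hV] using hw⟩
    -- density step: every g differs from a lattice second coordinate by an element of V
    have step1 : ∀ gG : G, ∃ l ∈ Ltilde, gG - Prod.snd l ∈ V := by
      intro gG
      have hO : IsOpen {h : G | gG - h ∈ V} :=
        hVopen.preimage (continuous_const.sub continuous_id)
      have hOne : {h : G | gG - h ∈ V}.Nonempty := by
        obtain ⟨v, hv⟩ := hVne
        exact ⟨gG - v, by simpa using hv⟩
      obtain ⟨h, hmem, hset⟩ := hdense.exists_mem_open hO hOne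
      obtain ⟨l, hl, rfl⟩ := hmem
      exact ⟨l, hl, hset⟩
    -- a compact set whose lattice translates cover everything
    obtain ⟨K₀, hK₀c, hK₀⟩ : ∃ K₀ : Set (Rd d × G), IsCompact K₀ ∧
        ∀ p : Rd d × G, ∃ l ∈ Ltilde, p - l ∈ K₀ := by
      have hqopen : IsOpenMap ((↑) : (Rd d × G) → (Rd d × G) ⧸ Ltilde) :=
        QuotientAddGroup.isOpenMap_coe
      have hqsurj : Function.Surjective ((↑) : (Rd d × G) → (Rd d × G) ⧸ Ltilde) :=
        QuotientAddGroup.mk_surjective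
      choose sec hsec using hqsurj
      choose Kc hKcc hKcn using fun z : (Rd d × G) ⧸ Ltilde => exists_compact_mem_nhds (sec z)
      have hcover : (Set.univ : Set ((Rd d × G) ⧸ Ltilde)) ⊆
          ⋃ z, ((↑) : (Rd d × G) → (Rd d × G) ⧸ Ltilde) '' interior (Kc z) := by
        intro z _
        refine Set.mem_iUnion.2 ⟨z, ⟨sec z, ?_, hsec z⟩⟩
        exact mem_interior_iff_mem_nhds.2 (hKcn z)
      obtain ⟨s, hs⟩ := isCompact_univ.elim_finite_subcover
        (fun z => ((↑) : (Rd d × G) → (Rd d × G) ⧸ Ltilde) '' interior (Kc z))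
        (fun z => hqopen _ isOpen_interior) hcover
      refine ⟨⋃ z ∈ s, Kc z, s.isCompact_biUnion (fun z _ => hKcc z), ?_⟩
      intro p
      have hp := hs (Set.mem_univ ((p : (Rd d × G) ⧸ Ltilde)))
      rw [Set.mem_iUnion₂] at hp
      obtain ⟨z, hz, k, hk, hqk⟩ := hp
      have hmem : p - k ∈ Ltilde := by
        have heq : ((p : (Rd d × G) ⧸ Ltilde)) = (k : (Rd d × G) ⧸ Ltilde) := hqk.symm
        exact (QuotientAddGroup.eq_iff_sub_mem).mp heq
      refine ⟨p - k, hmem, ?_⟩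
      have : p - (p - k) = k := sub_sub_cancel p k
      rw [this]
      exact Set.mem_biUnion hz (interior_subset hk)
    -- getting a uniform radius
    have step3 : ∃ N : ℕ, 0 < N ∧ ∀ p : Rd d × G, ∃ l ∈ Ltilde,
        ‖p.1 - l.1‖ < (N : ℝ) ∧ p.2 - l.2 ∈ V := by
      set O : ℕ → Set (Rd d × G) := fun n =>
        ⋃ l ∈ (Ltilde : Set (Rd d × G)), {p | ‖p.1 - l.1‖ < (n : ℝ) ∧ p.2 - l.2 ∈ V} with hO
      have hOopen : ∀ n, IsOpen (O n) := by
        intro n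
        refine isOpen_biUnion fun l _ => ?_
        have h1 : IsOpen {p : Rd d × G | ‖p.1 - l.1‖ < (n : ℝ)} :=
          isOpen_lt ((continuous_fst.sub continuous_const).norm) continuous_const
        have h2 : IsOpen {p : Rd d × G | p.2 - l.2 ∈ V} :=
          hVopen.preimage (continuous_snd.sub continuous_const)
        exact h1.inter h2
      have hcov : K₀ ⊆ ⋃ n : ℕ, O n := by
        intro k _
        obtain ⟨l, hl, hlV⟩ := step1 k.2
        obtain ⟨n, hn⟩ := exists_nat_gt ‖k.1 - l.1‖
        exact Set.mem_iUnion.2 ⟨n, Set.mem_biUnion hl ⟨hn, hlV⟩⟩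
      obtain ⟨s, hs⟩ := hK₀c.elim_finite_subcover O hOopen hcov
      refine ⟨s.sup id + 1, Nat.succ_pos _, ?_⟩
      have hON : ∀ n ∈ s, O n ⊆ O (s.sup id + 1) := by
        intro n hn p hp
        rw [hO, Set.mem_iUnion₂] at hp ⊢
        obtain ⟨l, hl, h1, h2⟩ := hp
        refine ⟨l, hl, lt_of_lt_of_le h1 ?_, h2⟩
        exact_mod_cast Nat.le_succ_of_le (Finset.le_sup (f := id) hn)
      have hKN : K₀ ⊆ O (s.sup id + 1) := by
        intro p hp
        obtain ⟨n, hn, hpn⟩ := Set.mem_iUnion₂.1 (hs hp)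
        exact hON n hn hpn
      intro p
      obtain ⟨l, hl, hpK⟩ := hK₀ p
      obtain ⟨l', hl', h1, h2⟩ := Set.mem_iUnion₂.1 (hKN hpK)
      refine ⟨l + l', Ltilde.add_mem hl hl', ?_, ?_⟩
      · have : (p - l).1 - l'.1 = p.1 - (l + l').1 := by
          simp [sub_sub]
        rw [← this]; exact h1
      · have : (p - l).2 - l'.2 = p.2 - (l + l').2 := by
          simp [sub_sub]
        rw [← this]; exact h2
    obtain ⟨N, hNpos, hN⟩ := step3
    refine ⟨(N : ℝ), by exact_mod_cast hNpos, ?_⟩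
    intro x
    obtain ⟨l, hl, h1, h2⟩ := hN ((x - t, (0 : G)))
    have hlW : l.2 ∈ W := by
      have hneg : -l.2 ∈ -(interior W) := by simpa [hV] using h2
      have : l.2 ∈ interior W := by
        have := Set.mem_neg.mp hneg
        simpa using this
      exact interior_subset this
    refine ⟨t + l.1, ?_, ?_⟩
    · rw [hΛ]
      refine ⟨l.1, ⟨l.2, ?_, hlW⟩, rfl⟩
      simpa using hl
    · have hdeq : dist x (t + l.1) = ‖(x - t) - l.1‖ := by
        rw [dist_eq_norm]
        congr 1
        abel
      rw [hdeq]
      exact le_of_lt h1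
end
end

section
/- Let Λ be a model set in ℝ^d arising from a cut and project scheme with window W. Then the difference set Λ − Λ is uniformly discrete; in particular every model set is a Meyer set. -/
open scoped Pointwise
open Metric MeasureTheory Filter Topology

noncomputable section

section Aux

variable {d : ℕ} {G : Type*} [TopologicalSpace G] [AddCommGroup G] [IsTopologicalAddGroup G]
  [T2Space G] (Ltilde : AddSubgroup (Rd d × G)) [DiscreteTopology Ltilde]

lemma aux_finite (K : Set G) (hK : IsCompact K) :
    Set.Finite {p : Rd d × G | p ∈ Ltilde ∧ p.1 ∈ Metric.closedBall 0 1 ∧ p.2 ∈ K} := by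
  have hclosed : IsClosed (Ltilde : Set (Rd d × G)) := AddSubgroup.isClosed_of_discrete
  have hcpt : IsCompact ((Metric.closedBall (0 : Rd d) 1) ×ˢ K) :=
    (isCompact_closedBall _ _).prod hK
  have heq : {p : Rd d × G | p ∈ Ltilde ∧ p.1 ∈ Metric.closedBall 0 1 ∧ p.2 ∈ K}
      = ((Ltilde : Set (Rd d × G)) ∩ ((Metric.closedBall (0 : Rd d) 1) ×ˢ K)) := by
    ext p; simp [Set.mem_prod, and_assoc]
  rw [heq]
  have hc : IsCompact ((Ltilde : Set (Rd d × G)) ∩ ((Metric.closedBall (0 : Rd d) 1) ×ˢ K)) :=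
    hcpt.inter_left hclosed
  have hdisc : DiscreteTopology (Ltilde : Set (Rd d × G)) := ‹DiscreteTopology Ltilde›
  exact hc.finite (isDiscrete_iff_discreteTopology.mpr (DiscreteTopology.of_subset hdisc Set.inter_subset_left))

lemma aux_ud
    (hinj : ∀ p ∈ Ltilde, ∀ q ∈ Ltilde, Prod.fst p = Prod.fst q → p = q)
    (K : Set G) (hK : IsCompact K) :
    UniformlyDiscrete (cutProject Ltilde K) := by
  have hKK : IsCompact (K - K) := by
    have : K - K = (fun p : G × G => p.1 - p.2) '' (K ×ˢ K) := by
      ext z; simp [Set.mem_sub, Set.mem_image, Set.mem_prod]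
    rw [this]
    exact (hK.prod hK).image (continuous_fst.sub continuous_snd)
  obtain hF := aux_finite Ltilde (K - K) hKK
  -- key: ∃ r ∈ (0,1], lower bound for norms of first coordinates of nonzero lattice points
  have key : ∃ r, 0 < r ∧ r ≤ 1 ∧ ∀ p ∈ Ltilde, p.1 ∈ Metric.closedBall (0 : Rd d) 1 →
      p.2 ∈ K - K → p ≠ 0 → r ≤ ‖p.1‖ := by
    classical
    set s := hF.toFinset.filter (fun p => p ≠ 0) with hs
    rcases s.eq_empty_or_nonempty with hse | hsne
    · refine ⟨1, one_pos, le_refl 1, fun p hp hp1 hp2 hp0 => ?_⟩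
      exfalso
      have : p ∈ s := by
        rw [hs, Finset.mem_filter, Set.Finite.mem_toFinset]
        exact ⟨⟨hp, hp1, hp2⟩, hp0⟩
      rw [hse] at this; exact absurd this (Finset.notMem_empty p)
    · refine ⟨min 1 (s.inf' hsne (fun p => ‖p.1‖)), ?_, min_le_left _ _,
        fun p hp hp1 hp2 hp0 => ?_⟩
      · refine lt_min one_pos ?_
        rw [Finset.lt_inf'_iff]
        intro p hps
        rw [hs, Finset.mem_filter, Set.Finite.mem_toFinset] at hps
        obtain ⟨⟨hpL, _, _⟩, hp0⟩ := hps
        have hp1ne : p.1 ≠ 0 := by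
          intro h
          apply hp0
          exact hinj p hpL 0 (zero_mem _) (by simp [h])
        simpa [norm_pos_iff] using hp1ne
      · refine le_trans (min_le_right _ _) ?_
        apply Finset.inf'_le
        rw [hs, Finset.mem_filter, Set.Finite.mem_toFinset]
        exact ⟨⟨hp, hp1, hp2⟩, hp0⟩
  obtain ⟨r, hr0, hr1, hr⟩ := key
  refine ⟨r, hr0, fun x hx y hy hxy => ?_⟩
  obtain ⟨g, hgL, hgK⟩ := hx
  obtain ⟨h, hhL, hhK⟩ := hy
  by_contra hlt
  push_neg at hlt
  have hd : dist x y < r := hlt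
  have hmem : ((x, g) - (y, h)) ∈ Ltilde := sub_mem hgL hhL
  have h1 : (x - y) ∈ Metric.closedBall (0 : Rd d) 1 := by
    rw [Metric.mem_closedBall, dist_zero_right]
    calc ‖x - y‖ = dist x y := (dist_eq_norm x y).symm
    _ ≤ r := le_of_lt hd
    _ ≤ 1 := hr1
  have h2 : g - h ∈ K - K := Set.sub_mem_sub hgK hhK
  have hne : ((x, g) - (y, h)) ≠ 0 := by
    intro hz
    apply hxy
    have := congrArg Prod.fst hz
    simpa [sub_eq_zero] using this
  have := hr ((x, g) - (y, h)) hmem h1 h2 hne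
  rw [Prod.fst_sub] at this
  have : r ≤ dist x y := by rwa [dist_eq_norm]
  exact absurd hd (not_lt.mpr this)

end Aux

/-- the difference set of a model set is uniformly discrete; in particular
every model set is a Meyer set (a Delone set whose difference set is uniformly discrete). -/
theorem modelSet_sub_self_uniformlyDiscrete_isMeyer
    {d : ℕ} {G : Type*} [TopologicalSpace G] [AddCommGroup G] [IsTopologicalAddGroup G]
    [LocallyCompactSpace G] [T2Space G]
    (Ltilde : AddSubgroup (Rd d × G)) [DiscreteTopology Ltilde]
    [CompactSpace ((Rd d × G) ⧸ Ltilde)]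
    (hinj : ∀ p ∈ Ltilde, ∀ q ∈ Ltilde, Prod.fst p = Prod.fst q → p = q)
    (hdense : Dense (Prod.snd '' (Ltilde : Set (Rd d × G))))
    (W : Set G) (hWne : W.Nonempty) (hWc : IsCompact W) (hWcl : W = closure (interior W))
    (t : Rd d) (Λ : Set (Rd d)) (hΛ : Λ = (fun x => t + x) '' cutProject Ltilde W) :
    UniformlyDiscrete (Λ - Λ) ∧ IsDelone Λ := by
  -- W - W compact
  have hWWc : IsCompact (W - W) := by
    have : W - W = (fun p : G × G => p.1 - p.2) '' (W ×ˢ W) := by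
      ext z; simp [Set.mem_sub, Set.mem_image, Set.mem_prod]
    rw [this]
    exact (hWc.prod hWc).image (continuous_fst.sub continuous_snd)
  -- Λ - Λ ⊆ cutProject (W - W)
  have hsub : Λ - Λ ⊆ cutProject Ltilde (W - W) := by
    rintro z hz
    rw [Set.mem_sub] at hz
    obtain ⟨a, ha, b, hb, hab⟩ := hz
    rw [hΛ] at ha hb
    obtain ⟨u, ⟨g, hgL, hgW⟩, rfl⟩ := ha
    obtain ⟨v, ⟨h, hhL, hhW⟩, rfl⟩ := hb
    refine ⟨g - h, ?_, Set.sub_mem_sub hgW hhW⟩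
    have : ((u, g) - (v, h)) ∈ Ltilde := sub_mem hgL hhL
    have hz' : z = u - v := by rw [← hab]; dsimp only; abel
    rw [hz']
    exact this
  have hudWW := aux_ud Ltilde hinj (W - W) hWWc
  have hud1 : UniformlyDiscrete (Λ - Λ) := by
    obtain ⟨r, hr0, hr⟩ := hudWW
    exact ⟨r, hr0, fun x hx y hy hxy => hr x (hsub hx) y (hsub hy) hxy⟩
  refine ⟨hud1, ?_, ?_⟩
  · -- Λ uniformly discrete
    obtain ⟨r, hr0, hr⟩ := aux_ud Ltilde hinj W hWc
    refine ⟨r, hr0, fun x hx y hy hxy => ?_⟩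
    rw [hΛ] at hx hy
    obtain ⟨u, hu, rfl⟩ := hx
    obtain ⟨v, hv, rfl⟩ := hy
    rw [dist_add_left]
    exact hr u hu v hv (fun h => hxy (by rw [h]))
  · -- relative density
    have hVne : (interior W).Nonempty := by
      by_contra hemp
      rw [Set.not_nonempty_iff_eq_empty] at hemp
      rw [hemp, closure_empty] at hWcl
      exact hWne.ne_empty hWcl
    obtain ⟨w₀, hw₀⟩ := hVne
    set V' : Set G := (fun v => w₀ - v) ⁻¹' (interior W) with hV'
    have hV'o : IsOpen V' := isOpen_interior.preimage (continuous_const.sub continuous_id)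
    have hV'ne : V'.Nonempty := ⟨0, by simpa [hV'] using hw₀⟩
    -- quotient map
    set q : Rd d × G → (Rd d × G) ⧸ Ltilde := QuotientAddGroup.mk with hq
    have hopen : IsOpenMap q := QuotientAddGroup.isOpenMap_coe
    -- the open cover
    set U : ℕ → Set ((Rd d × G) ⧸ Ltilde) :=
      fun n => q '' ((Metric.ball (0 : Rd d) n) ×ˢ V') with hU
    have hUopen : ∀ n, IsOpen (U n) := fun n =>
      hopen _ ((Metric.isOpen_ball).prod hV'o)
    have hUcover : Set.univ ⊆ ⋃ n, U n := by
      intro z _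
      obtain ⟨p, rfl⟩ := QuotientAddGroup.mk_surjective z
      obtain ⟨x, g⟩ := p
      -- find ℓ ∈ Ltilde with ℓ.2 ∈ g - V' i.e. g - ℓ.2 ∈ V'
      have hopen2 : IsOpen {h : G | g - h ∈ V'} :=
        hV'o.preimage (continuous_const.sub continuous_id)
      have hne2 : {h : G | g - h ∈ V'}.Nonempty := by
        obtain ⟨v, hv⟩ := hV'ne
        exact ⟨g - v, by simpa using hv⟩
      obtain ⟨h, hh1, hh2⟩ := hdense.exists_mem_open hopen2 hne2
      obtain ⟨ℓ, hℓL, hℓ2⟩ := hh1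
      obtain ⟨n, hn⟩ := exists_nat_gt ‖x - ℓ.1‖
      refine Set.mem_iUnion.mpr ⟨n, ?_⟩
      refine ⟨(x - ℓ.1, g - ℓ.2), ⟨?_, ?_⟩, ?_⟩
      · rw [Metric.mem_ball, dist_zero_right]; exact hn
      · rw [hℓ2]; exact hh2
      · rw [hq]
        rw [QuotientAddGroup.eq_iff_sub_mem]
        have : (x - ℓ.1, g - ℓ.2) - (x, g) = -ℓ := by
          ext <;> simp
        rw [this]
        exact neg_mem hℓL
    obtain ⟨s, hsc⟩ := isCompact_univ.elim_finite_subcover U hUopen hUcover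
    set N : ℕ := s.sup id + 1 with hN
    have hcov : ∀ p : Rd d × G, ∃ y ∈ (Metric.ball (0 : Rd d) N) ×ˢ V', p - y ∈ Ltilde := by
      intro p
      have := hsc (Set.mem_univ (q p))
      rw [Set.mem_iUnion₂] at this
      obtain ⟨n, hns, hpn⟩ := this
      obtain ⟨y, ⟨hy1, hy2⟩, hyq⟩ := hpn
      refine ⟨y, ⟨?_, hy2⟩, ?_⟩
      · rw [Metric.mem_ball] at hy1 ⊢
        refine lt_of_lt_of_le hy1 ?_
        have : n ≤ N := le_trans (Finset.le_sup (f := id) hns) (Nat.le_succ _)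
        exact_mod_cast this
      · rw [hq] at hyq
        have := (QuotientAddGroup.eq_iff_sub_mem).mp hyq
        have h2 : p - y = -(y - p) := by abel
        rw [h2]
        exact neg_mem this
    refine ⟨N, by positivity, fun x => ?_⟩
    obtain ⟨y, ⟨hy1, hy2⟩, hyL⟩ := hcov (x - t, w₀)
    refine ⟨t + (x - t - y.1), ?_, ?_⟩
    · rw [hΛ]
      refine ⟨x - t - y.1, ⟨w₀ - y.2, ?_, ?_⟩, rfl⟩
      · have : ((x - t, w₀) - y) ∈ Ltilde := hyL
        have h2 : (x - t, w₀) - y = (x - t - y.1, w₀ - y.2) := rfl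
        rwa [h2] at this
      · exact interior_subset hy2
    · have : x - (t + (x - t - y.1)) = y.1 := by abel
      rw [dist_eq_norm, this]
      rw [Metric.mem_ball, dist_zero_right] at hy1
      exact le_of_lt hy1
end
end

section
/- Every generic model set Λ in ℝ^d is repetitive: for every radius r > 0 there is R > 0 such that for all v, w ∈ ℝ^d there exists t ∈ ℝ^d with ‖t − w‖ ≤ R and (Λ − t) ∩ B_r(0) = (Λ − v) ∩ B_r(0). -/
open scoped Pointwise
open Metric MeasureTheory Filter Topology

noncomputable section

section aux
variable {d : ℕ} {G : Type*} [TopologicalSpace G] [AddCommGroup G] [IsTopologicalAddGroup G]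
  [T2Space G] (Ltilde : AddSubgroup (Rd d × G))

lemma finite_inter [DiscreteTopology Ltilde] (C : Set (Rd d × G)) (hC : IsCompact C) :
    ((Ltilde : Set (Rd d × G)) ∩ C).Finite := by
  have hcl : IsClosed (Ltilde : Set (Rd d × G)) := AddSubgroup.isClosed_of_discrete
  have hcompact : IsCompact ((Ltilde : Set (Rd d × G)) ∩ C) := hC.inter_left hcl
  have hdisc : DiscreteTopology ((Ltilde : Set (Rd d × G)) ∩ C : Set (Rd d × G)) :=
    DiscreteTopology.of_subset (inferInstanceAs (DiscreteTopology Ltilde)) Set.inter_subset_left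
  exact hcompact.finite (isDiscrete_iff_discreteTopology.2 hdisc)

lemma relDense [CompactSpace ((Rd d × G) ⧸ Ltilde)]
    (hdense : Dense (Prod.snd '' (Ltilde : Set (Rd d × G))))
    (V : Set G) (hV : IsOpen V) (hVne : V.Nonempty) :
    ∃ R > (0:ℝ), ∀ u : Rd d, ∃ p ∈ Ltilde, dist (p : Rd d × G).1 u ≤ R ∧ (p : Rd d × G).2 ∈ V := by
  set V' : Set G := -V with hV'def
  have hV' : IsOpen V' := hV.neg
  have hV'ne : V'.Nonempty := hVne.neg
  set f : ℕ → Set ((Rd d × G) ⧸ Ltilde) :=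
    fun n => QuotientAddGroup.mk '' (ball (0 : Rd d) (n+1) ×ˢ V') with hf
  have hopen : ∀ n, IsOpen (f n) :=
    fun n => QuotientAddGroup.isOpenMap_coe _ (isOpen_ball.prod hV')
  have hcover : ∀ τ : (Rd d × G) ⧸ Ltilde, ∃ n, τ ∈ f n := by
    intro τ
    obtain ⟨⟨aa, bb⟩, rfl⟩ := QuotientAddGroup.mk_surjective τ
    have hO : IsOpen ((fun x => bb - x) ⁻¹' V') :=
      hV'.preimage (continuous_const.sub continuous_id)
    have hOne : ((fun x => bb - x) ⁻¹' V').Nonempty := by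
      obtain ⟨v, hv⟩ := hV'ne
      exact ⟨bb - v, by simpa using hv⟩
    obtain ⟨g, ⟨p, hpL, hpg⟩, hgO⟩ := hdense.exists_mem_open hO hOne
    obtain ⟨n, hn⟩ := exists_nat_gt ‖aa - p.1‖
    refine ⟨n, ⟨(aa - p.1, bb - p.2), ⟨?_, ?_⟩, ?_⟩⟩
    · simp only [mem_ball, dist_zero_right]
      exact lt_of_lt_of_le hn (by linarith)
    · simpa [hpg] using hgO
    · refine (QuotientAddGroup.eq.2 ?_).symm
      have : -((aa, bb) : Rd d × G) + (aa - p.1, bb - p.2) = -p := by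
        ext <;> simp <;> abel
      rw [this]
      exact neg_mem hpL
  obtain ⟨s, hs⟩ := isCompact_univ.elim_finite_subcover f hopen
    (by intro τ _; simpa using hcover τ)
  set N := s.sup id with hN
  have hfN : ∀ τ : (Rd d × G) ⧸ Ltilde, τ ∈ f N := by
    intro τ
    have := hs (Set.mem_univ τ)
    simp only [Set.mem_iUnion] at this
    obtain ⟨i, his, hτ⟩ := this
    obtain ⟨ab, ⟨hab1, hab2⟩, habe⟩ := hτ
    refine ⟨ab, ⟨?_, hab2⟩, habe⟩
    refine ball_subset_ball ?_ hab1
    have : (i : ℝ) ≤ N := by exact_mod_cast Finset.le_sup (f := id) his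
    linarith
  refine ⟨N + 1, by positivity, fun u => ?_⟩
  obtain ⟨ab, ⟨hab1, hab2⟩, habe⟩ := hfN (QuotientAddGroup.mk (u, (0:G)))
  have hmem : -ab + ((u, (0:G)) : Rd d × G) ∈ Ltilde := QuotientAddGroup.eq.1 habe
  refine ⟨-ab + (u, 0), hmem, ?_, ?_⟩
  · have : (-ab + ((u, (0:G)) : Rd d × G)).1 = u - ab.1 := by simp; abel
    rw [this]
    simp only [mem_ball, dist_zero_right] at hab1
    have h1 : dist (u - ab.1) u = ‖ab.1‖ := by rw [dist_eq_norm]; simp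
    rw [h1]; exact le_of_lt hab1
  · have : (-ab + ((u, (0:G)) : Rd d × G)).2 = -ab.2 := by simp
    rw [this]
    rw [hV'def] at hab2
    simpa using hab2

end aux

section main
set_option linter.unusedSectionVars false
variable {d : ℕ} {G : Type*} [TopologicalSpace G] [AddCommGroup G] [IsTopologicalAddGroup G]
  [LocallyCompactSpace G] [T2Space G] (Ltilde : AddSubgroup (Rd d × G))
  [DiscreteTopology Ltilde] [CompactSpace ((Rd d × G) ⧸ Ltilde)]

lemma step2
    (hdense : Dense (Prod.snd '' (Ltilde : Set (Rd d × G))))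
    (W : Set G) (hWc : IsCompact W)
    (hgen : frontier W ∩ (Prod.snd '' (Ltilde : Set (Rd d × G))) = ∅)
    (ρ : ℝ) (a : Rd d) :
    ∃ R > (0:ℝ), ∀ u : Rd d, ∃ b : Rd d, dist b u ≤ R ∧
      ∀ x ∈ closedBall (0 : Rd d) ρ,
        (x + a ∈ cutProject Ltilde W ↔ x + b ∈ cutProject Ltilde W) := by
  have hWclosed : IsClosed W := hWc.isClosed
  have hnotfr : ∀ z : Rd d × G, z ∈ Ltilde → z.2 ∉ frontier W := by
    intro z hz hfr
    have : z.2 ∈ frontier W ∩ (Prod.snd '' (Ltilde : Set (Rd d × G))) :=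
      ⟨hfr, ⟨z, hz, rfl⟩⟩
    rw [hgen] at this
    exact this
  obtain ⟨K, hKc, hK⟩ := exists_compact_mem_nhds (0 : G)
  -- finite sets of relevant lattice points
  set F₁ : Set (Rd d × G) := (Ltilde : Set (Rd d × G)) ∩ (closedBall a ρ ×ˢ W) with hF₁def
  set F₂ : Set (Rd d × G) :=
    (Ltilde : Set (Rd d × G)) ∩ (closedBall a ρ ×ˢ ((W + (-K)) \ W)) with hF₂def
  have hF₁ : F₁.Finite := finite_inter Ltilde _ ((isCompact_closedBall a ρ).prod hWc)
  have hF₂ : F₂.Finite := by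
    refine Set.Finite.subset
      (finite_inter Ltilde _ ((isCompact_closedBall a ρ).prod (hWc.add hKc.neg))) ?_
    exact Set.inter_subset_inter_right _
      (Set.prod_mono_right (Set.diff_subset))
  set V : Set G := interior K ∩
      ((⋂ z ∈ F₁, (fun g => z.2 + g) ⁻¹' interior W) ∩
       (⋂ z ∈ F₂, (fun g => z.2 + g) ⁻¹' Wᶜ)) with hVdef
  have hVopen : IsOpen V := by
    refine isOpen_interior.inter (IsOpen.inter ?_ ?_)
    · exact hF₁.isOpen_biInter fun z _ =>
        isOpen_interior.preimage (continuous_const.add continuous_id)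
    · exact hF₂.isOpen_biInter fun z _ =>
        hWclosed.isOpen_compl.preimage (continuous_const.add continuous_id)
  have h0V : (0:G) ∈ V := by
    refine ⟨mem_interior_iff_mem_nhds.2 hK, ?_, ?_⟩
    · refine Set.mem_biInter fun z hz => ?_
      have hzW : z.2 ∈ W := hz.2.2
      have : z.2 ∈ interior W := by
        have := hnotfr z hz.1
        rw [hWclosed.frontier_eq] at this
        by_contra h
        exact this ⟨hzW, h⟩
      simpa using this
    · refine Set.mem_biInter fun z hz => ?_
      have : z.2 ∉ W := hz.2.2.2
      simpa using this
  obtain ⟨R, hRpos, hR⟩ := relDense Ltilde hdense V hVopen ⟨0, h0V⟩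
  refine ⟨R, hRpos, fun u => ?_⟩
  obtain ⟨ℓ, hℓL, hℓdist, hℓV⟩ := hR (u - a)
  obtain ⟨hℓK, hℓ₁, hℓ₂⟩ := hℓV
  refine ⟨a + ℓ.1, ?_, ?_⟩
  · have heq : dist (a + ℓ.1) u = dist ℓ.1 (u - a) := by
      rw [dist_eq_norm, dist_eq_norm]; congr 1; abel
    rw [heq]; exact hℓdist
  · intro x hx
    have hxball : x + a ∈ closedBall a ρ := by
      simpa [dist_eq_norm, mem_closedBall, dist_zero_right] using hx
    constructor
    · rintro ⟨g, hgL, hgW⟩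
      have hzF₁ : ((x + a, g) : Rd d × G) ∈ F₁ := ⟨hgL, hxball, hgW⟩
      have hgint : g + ℓ.2 ∈ interior W := by
        have := Set.mem_iInter₂.1 hℓ₁ _ hzF₁
        simpa using this
      refine ⟨g + ℓ.2, ?_, interior_subset hgint⟩
      have : ((x + (a + ℓ.1), g + ℓ.2) : Rd d × G) = (x + a, g) + ℓ := by
        ext <;> simp <;> abel
      rw [this]
      exact add_mem hgL hℓL
    · rintro ⟨g', hgL', hgW'⟩
      have hzL : ((x + a, g' - ℓ.2) : Rd d × G) ∈ Ltilde := by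
        have : ((x + a, g' - ℓ.2) : Rd d × G) = (x + (a + ℓ.1), g') - ℓ := by
          ext <;> simp <;> abel
        rw [this]
        exact sub_mem hgL' hℓL
      have hzW : g' - ℓ.2 ∈ W := by
        by_contra h
        have hzF₂ : ((x + a, g' - ℓ.2) : Rd d × G) ∈ F₂ := by
          refine ⟨hzL, hxball, ⟨?_, h⟩⟩
          exact ⟨g', hgW', -ℓ.2, Set.neg_mem_neg.2 (interior_subset hℓK), by abel⟩
        have := Set.mem_iInter₂.1 hℓ₂ _ hzF₂
        simp only [Set.mem_preimage, Set.mem_compl_iff] at this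
        apply this
        have : g' - ℓ.2 + ℓ.2 = g' := by abel
        rw [this]
        exact hgW'
      exact ⟨g' - ℓ.2, hzL, hzW⟩

end main

lemma mem_shift {d : ℕ} (A : Set (Rd d)) (t s x : Rd d) :
    x ∈ ((fun y => y - s) '' ((fun y => t + y) '' A)) ↔ x + (s - t) ∈ A := by
  constructor
  · rintro ⟨-, ⟨a, ha, rfl⟩, rfl⟩
    have : t + a - s + (s - t) = a := by abel
    rwa [this]
  · intro h
    refine ⟨t + (x + (s - t)), ⟨x + (s - t), h, rfl⟩, ?_⟩
    show t + (x + (s - t)) - s = x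
    abel

theorem genericModelSet_repetitive'
    {d : ℕ} {G : Type*} [TopologicalSpace G] [AddCommGroup G] [IsTopologicalAddGroup G]
    [LocallyCompactSpace G] [T2Space G]
    (Ltilde : AddSubgroup (Rd d × G)) [DiscreteTopology Ltilde]
    [CompactSpace ((Rd d × G) ⧸ Ltilde)]
    (hinj : ∀ p ∈ Ltilde, ∀ q ∈ Ltilde, Prod.fst p = Prod.fst q → p = q)
    (hdense : Dense (Prod.snd '' (Ltilde : Set (Rd d × G))))
    (W : Set G) (hWne : W.Nonempty) (hWc : IsCompact W) (hWcl : W = closure (interior W))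
    (hgen : frontier W ∩ (Prod.snd '' (Ltilde : Set (Rd d × G))) = ∅)
    (t : Rd d) (Λ : Set (Rd d)) (hΛ : Λ = (fun x => t + x) '' cutProject Ltilde W) :
    ∀ r > (0:ℝ), ∃ R > (0:ℝ), ∀ v w : Rd d, ∃ t' : Rd d, ‖t' - w‖ ≤ R ∧
      ((fun x => x - t') '' Λ) ∩ closedBall (0 : Rd d) r
        = ((fun x => x - v) '' Λ) ∩ closedBall (0 : Rd d) r := by
  intro r hr
  -- interior of the window is nonempty
  have hintne : (interior W).Nonempty := by
    rcases Set.eq_empty_or_nonempty (interior W) with h | h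
    · exfalso; rw [h] at hWcl; simp at hWcl; rw [hWcl] at hWne; exact Set.not_nonempty_empty hWne
    · exact h
  -- anchors are relatively dense
  obtain ⟨R₀, hR₀pos, hRD⟩ := relDense Ltilde hdense (interior W) isOpen_interior hintne
  set ρ : ℝ := r + R₀ with hρdef
  -- finitely many anchored patch classes
  set D : Set (Rd d) :=
    Prod.fst '' ((Ltilde : Set (Rd d × G)) ∩ (closedBall (0:Rd d) ρ ×ˢ (W + (-W)))) with hDdef
  have hDfin : D.Finite :=
    (finite_inter Ltilde _ ((isCompact_closedBall _ _).prod (hWc.add hWc.neg))).image _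
  set T : (Rd d × G) → Set (Rd d) :=
    fun p => {x | x ∈ closedBall (0:Rd d) ρ ∧ x + p.1 ∈ cutProject Ltilde W} with hTdef
  set Anchors : Set (Rd d × G) := {p | p ∈ Ltilde ∧ p.2 ∈ W} with hAdef
  have hTD : ∀ p ∈ Anchors, T p ⊆ D := by
    rintro p ⟨hpL, hpW⟩ x ⟨hxball, g, hgL, hgW⟩
    refine ⟨(x + p.1, g) - p, ⟨sub_mem hgL hpL, ?_, ?_⟩, ?_⟩
    · show (x + p.1 - p.1) ∈ closedBall (0:Rd d) ρ
      have : x + p.1 - p.1 = x := by abel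
      rwa [this]
    · exact ⟨g, hgW, -p.2, Set.neg_mem_neg.2 hpW, (sub_eq_add_neg g p.2).symm⟩
    · show x + p.1 - p.1 = x
      abel
  set ClassSet : Set (Set (Rd d)) := T '' Anchors with hCSdef
  have hCSfin : ClassSet.Finite := by
    refine Set.Finite.subset hDfin.finite_subsets ?_
    rintro S ⟨p, hp, rfl⟩
    exact hTD p hp
  -- per-class matching with uniform bound
  have key : ∀ S : Set (Rd d), ∃ B : ℝ, 0 < B ∧ (S ∈ ClassSet → ∀ u : Rd d, ∃ b : Rd d,
      dist b u ≤ B ∧ ∀ x ∈ closedBall (0:Rd d) ρ, (x ∈ S ↔ x + b ∈ cutProject Ltilde W)) := by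
    intro S
    by_cases hS : S ∈ ClassSet
    · obtain ⟨p, hpA, hpT⟩ := hS
      obtain ⟨B, hBpos, hB⟩ := step2 Ltilde hdense W hWc hgen ρ p.1
      refine ⟨B, hBpos, fun _ u => ?_⟩
      obtain ⟨b, hbd, hmatch⟩ := hB u
      refine ⟨b, hbd, fun x hx => ?_⟩
      rw [← hpT]
      show (x ∈ closedBall (0:Rd d) ρ ∧ x + p.1 ∈ cutProject Ltilde W) ↔ _
      rw [← hmatch x hx]
      exact ⟨fun h => h.2, fun h => ⟨hx, h⟩⟩
    · exact ⟨1, one_pos, fun h => absurd h hS⟩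
  choose Bf hBfpos hBf using key
  obtain ⟨C, hC⟩ := (hCSfin.image Bf).bddAbove
  refine ⟨max C 1, lt_of_lt_of_le one_pos (le_max_right _ _), fun v w => ?_⟩
  -- find an anchor near v - t
  obtain ⟨p, hpL, hpdist, hpint⟩ := hRD (v - t)
  set c : Rd d := v - t - p.1 with hcdef
  have hc : ‖c‖ ≤ R₀ := by
    rw [hcdef, ← dist_eq_norm, dist_comm]
    exact hpdist
  have hpA : p ∈ Anchors := ⟨hpL, interior_subset hpint⟩
  have hS : T p ∈ ClassSet := ⟨p, hpA, rfl⟩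
  obtain ⟨b, hbd, hmatch⟩ := hBf (T p) hS (w - t - c)
  refine ⟨t + (b + c), ?_, ?_⟩
  · have heq : ‖t + (b + c) - w‖ = dist b (w - t - c) := by
      rw [dist_eq_norm]; congr 1; abel
    rw [heq]
    refine le_trans hbd (le_trans ?_ (le_max_left C 1))
    exact hC ⟨T p, hS, rfl⟩
  · ext x
    simp only [hΛ, Set.mem_inter_iff, mem_shift]
    refine and_congr_left fun hx => ?_
    have hxc : x + c ∈ closedBall (0:Rd d) ρ := by
      simp only [mem_closedBall, dist_zero_right] at hx ⊢
      calc ‖x + c‖ ≤ ‖x‖ + ‖c‖ := norm_add_le _ _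
      _ ≤ r + R₀ := add_le_add hx hc
    have h1 : x + (t + (b + c) - t) = (x + c) + b := by abel
    have h2 : x + (v - t) = (x + c) + p.1 := by rw [hcdef]; abel
    rw [h1, h2]
    have hiff := hmatch (x + c) hxc
    constructor
    · intro h
      exact (hiff.2 h).2
    · intro h
      exact hiff.1 ⟨hxc, h⟩

/-- every generic model set is repetitive. -/
theorem genericModelSet_repetitive
    {d : ℕ} {G : Type*} [TopologicalSpace G] [AddCommGroup G] [IsTopologicalAddGroup G]
    [LocallyCompactSpace G] [T2Space G]
    (Ltilde : AddSubgroup (Rd d × G)) [DiscreteTopology Ltilde]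
    [CompactSpace ((Rd d × G) ⧸ Ltilde)]
    (hinj : ∀ p ∈ Ltilde, ∀ q ∈ Ltilde, Prod.fst p = Prod.fst q → p = q)
    (hdense : Dense (Prod.snd '' (Ltilde : Set (Rd d × G))))
    (W : Set G) (hWne : W.Nonempty) (hWc : IsCompact W) (hWcl : W = closure (interior W))
    (hgen : frontier W ∩ (Prod.snd '' (Ltilde : Set (Rd d × G))) = ∅)
    (t : Rd d) (Λ : Set (Rd d)) (hΛ : Λ = (fun x => t + x) '' cutProject Ltilde W) :
    ∀ r > (0:ℝ), ∃ R > (0:ℝ), ∀ v w : Rd d, ∃ t' : Rd d, ‖t' - w‖ ≤ R ∧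
      ((fun x => x - t') '' Λ) ∩ closedBall (0 : Rd d) r
        = ((fun x => x - v) '' Λ) ∩ closedBall (0 : Rd d) r := by
  exact genericModelSet_repetitive' Ltilde hinj hdense W hWne hWc hWcl hgen t Λ hΛ
end
end

section
/- For every r > 0, the space X(r), equipped with the uniformity generated by the entourages U(K, ε), is a complete Hausdorff uniform space. -/
open scoped Pointwise
open Metric MeasureTheory Filter Topology

noncomputable section

/-- The space `X(r)` of subsets of `ℝ^d` in which distinct points are at distance
at least `r`. -/
structure XType (d : ℕ) (r : ℝ) where
  (toSet : Set (Rd d))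
  (minDist : ∀ x ∈ toSet, ∀ y ∈ toSet, x ≠ y → r ≤ dist x y)

/-- The entourage `U(K, ε)` of pairs `(S, S')` such that a translate of `S` by a vector
of norm at most `ε` agrees with `S'` on `K`. -/
def entourage {d : ℕ} {r : ℝ} (K : Set (Rd d)) (ε : ℝ) :
    Set (XType d r × XType d r) :=
  {p | ∃ v : Rd d, ‖v‖ ≤ ε ∧
    ((fun x => v + x) '' p.1.toSet) ∩ K = p.2.toSet ∩ K}

/-- The collection of entourages `U(K, ε)`, `K` compact, `ε > 0`. -/
def entourages (d : ℕ) (r : ℝ) : Set (Set (XType d r × XType d r)) :=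
  {E | ∃ (K : Set (Rd d)) (ε : ℝ), IsCompact K ∧ 0 < ε ∧ E = entourage K ε}

open scoped Uniformity

namespace XHelp

variable {d : ℕ} {r : ℝ}

lemma XType.ext' {S S' : XType d r} (h : S.toSet = S'.toSet) : S = S' := by
  cases S; cases S'; simpa using h

lemma mem_add_image {v y : Rd d} {S : Set (Rd d)} :
    y ∈ (fun x => v + x) '' S ↔ y - v ∈ S := by
  constructor
  · rintro ⟨s, hs, rfl⟩; simpa using hs
  · intro h; exact ⟨y - v, h, add_sub_cancel v y⟩

lemma entourage_mono {K K' : Set (Rd d)} {ε ε' : ℝ} (hK : K ⊆ K') (hε : ε ≤ ε') :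
    entourage (r := r) K' ε ⊆ entourage K ε' := by
  rintro ⟨S, S'⟩ ⟨v, hv, he⟩
  refine ⟨v, hv.trans hε, ?_⟩
  rw [← Set.inter_eq_self_of_subset_right hK, ← Set.inter_assoc, ← Set.inter_assoc, he]

lemma diag_mem_entourage {K : Set (Rd d)} {ε : ℝ} (hε : 0 ≤ ε) (S : XType d r) :
    (S, S) ∈ entourage K ε := by
  refine ⟨0, by simpa using hε, ?_⟩
  simp [Set.image_id']

lemma subset_add_cball {K : Set (Rd d)} {ε : ℝ} (hε : 0 ≤ ε) :
    K ⊆ K + closedBall 0 ε := fun x hx => by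
  have : x + 0 ∈ K + closedBall (0 : Rd d) ε :=
    Set.add_mem_add hx (by simpa using hε)
  simpa using this

lemma add_mem_add_cball {K : Set (Rd d)} {ε : ℝ} {x v : Rd d} (hx : x ∈ K)
    (hv : ‖v‖ ≤ ε) : v + x ∈ K + closedBall 0 ε := by
  have : x + v ∈ K + closedBall (0 : Rd d) ε :=
    Set.add_mem_add hx (by simpa using hv)
  simpa [add_comm] using this

lemma sub_mem_add_cball {K : Set (Rd d)} {ε : ℝ} {x v : Rd d} (hx : x ∈ K)
    (hv : ‖v‖ ≤ ε) : x - v ∈ K + closedBall 0 ε := by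
  have : (-v) + x ∈ K + closedBall 0 ε := add_mem_add_cball hx (by simpa using hv)
  simpa [neg_add_eq_sub] using this

lemma entourage_swap {K : Set (Rd d)} {ε : ℝ} :
    entourage (r := r) (K + closedBall 0 ε) ε ⊆ Prod.swap ⁻¹' entourage K ε := by
  rintro ⟨S, S'⟩ ⟨v, hv, he⟩
  refine ⟨-v, by simpa using hv, ?_⟩
  ext x
  simp only [Set.mem_inter_iff, mem_add_image, sub_neg_eq_add]
  constructor
  · rintro ⟨hxS', hxK⟩
    have h1 : x + v ∈ S'.toSet ∩ (K + closedBall 0 ε) := by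
      refine ⟨hxS', ?_⟩
      have := add_mem_add_cball hxK hv
      simpa [add_comm] using this
    rw [← he] at h1
    have h2 := h1.1
    rw [mem_add_image, add_sub_cancel_right] at h2
    exact ⟨h2, hxK⟩
  · rintro ⟨hxS, hxK⟩
    have h1 : v + x ∈ ((fun y => v + y) '' S.toSet) ∩ (K + closedBall 0 ε) :=
      ⟨⟨x, hxS, rfl⟩, add_mem_add_cball hxK hv⟩
    rw [he] at h1
    exact ⟨by rw [add_comm]; exact h1.1, hxK⟩

lemma entourage_comp {K : Set (Rd d)} {ε : ℝ} (hε : 0 ≤ ε) :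
    SetRel.comp (entourage (r := r) (K + closedBall 0 ε) (ε / 2))
      (entourage (K + closedBall 0 ε) (ε / 2)) ⊆ entourage K ε := by
  rintro ⟨S, S''⟩ ⟨S', ⟨v, hv, he1⟩, ⟨w, hw, he2⟩⟩
  have hw' : ‖w‖ ≤ ε := by linarith [hw]
  refine ⟨w + v, by
    calc ‖w + v‖ ≤ ‖w‖ + ‖v‖ := norm_add_le _ _
    _ ≤ ε := by linarith, ?_⟩
  ext x
  simp only [Set.mem_inter_iff, mem_add_image]
  constructor
  · rintro ⟨hxS, hxK⟩
    have h1 : x - w ∈ ((fun y => v + y) '' S.toSet) ∩ (K + closedBall 0 ε) := by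
      refine ⟨?_, sub_mem_add_cball hxK hw'⟩
      rw [mem_add_image, sub_sub]
      exact hxS
    rw [he1] at h1
    have h2 : x ∈ ((fun y => w + y) '' S'.toSet) ∩ (K + closedBall 0 ε) := by
      refine ⟨?_, subset_add_cball hε hxK⟩
      rw [mem_add_image]
      exact h1.1
    rw [he2] at h2
    exact ⟨h2.1, hxK⟩
  · rintro ⟨hxS'', hxK⟩
    have h2 : x ∈ S''.toSet ∩ (K + closedBall 0 ε) := ⟨hxS'', subset_add_cball hε hxK⟩
    rw [← he2] at h2
    have h1 : x - w ∈ S'.toSet ∩ (K + closedBall 0 ε) := by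
      refine ⟨?_, sub_mem_add_cball hxK hw'⟩
      rw [← mem_add_image]
      exact h2.1
    rw [← he1] at h1
    have h3 := h1.1
    rw [mem_add_image, sub_sub] at h3
    exact ⟨h3, hxK⟩

lemma inter_aux (t : Finset (Set (XType d r × XType d r)))
    (hts : ↑t ⊆ entourages d r) :
    ∃ K ε, IsCompact (K : Set (Rd d)) ∧ 0 < ε ∧
      entourage (r := r) K ε ⊆ ⋂₀ (↑t : Set (Set (XType d r × XType d r))) := by
  classical
  induction t using Finset.induction_on with
  | empty => exact ⟨∅, 1, isCompact_empty, one_pos, by simp⟩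
  | @insert E t hEt ih =>
    obtain ⟨K, ε, hK, hε, hsub⟩ :=
      ih (fun x hx => hts (by rw [Finset.coe_insert]; exact Set.mem_insert_of_mem _ hx))
    obtain ⟨KE, εE, hKE, hεE, rfl⟩ :=
      hts (show E ∈ _ by rw [Finset.coe_insert]; exact Set.mem_insert _ _)
    refine ⟨K ∪ KE, min ε εE, hK.union hKE, lt_min hε hεE, ?_⟩
    intro p hp
    rw [Finset.coe_insert, Set.sInter_insert]
    exact ⟨entourage_mono Set.subset_union_right (min_le_right _ _) hp,
      hsub (entourage_mono Set.subset_union_left (min_le_left _ _) hp)⟩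

lemma mem_generate_iff' {s : Set (XType d r × XType d r)} :
    s ∈ Filter.generate (entourages d r) ↔
      ∃ K ε, IsCompact (K : Set (Rd d)) ∧ 0 < ε ∧ entourage K ε ⊆ s := by
  constructor
  · intro hs
    rw [Filter.mem_generate_iff] at hs
    obtain ⟨t, hts, htf, hsub⟩ := hs
    suffices h : ∃ K ε, IsCompact (K : Set (Rd d)) ∧ 0 < ε ∧ entourage (r := r) K ε ⊆ ⋂₀ t by
      obtain ⟨K, ε, h1, h2, h3⟩ := h
      exact ⟨K, ε, h1, h2, h3.trans hsub⟩
    have := inter_aux htf.toFinset (by rwa [Set.Finite.coe_toFinset])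
    rwa [Set.Finite.coe_toFinset] at this
  · rintro ⟨K, ε, hK, hε, hsub⟩
    exact Filter.mem_of_superset (Filter.mem_generate_of_mem ⟨K, ε, hK, hε, rfl⟩) hsub

/-- The uniform space structure on `XType d r`. -/
def Xuniform (d : ℕ) (r : ℝ) : UniformSpace (XType d r) :=
  UniformSpace.ofCore
    { uniformity := Filter.generate (entourages d r)
      refl := by
        rw [Filter.le_def]
        intro s hs
        rw [mem_generate_iff'] at hs
        obtain ⟨K, ε, hK, hε, hsub⟩ := hs
        rw [Filter.mem_principal]
        rintro ⟨S, S'⟩ hSS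
        rw [SetRel.mem_id] at hSS
        subst hSS
        exact hsub (diag_mem_entourage hε.le _)
      symm := by
        rw [Filter.tendsto_def]
        intro s hs
        rw [mem_generate_iff'] at hs ⊢
        obtain ⟨K, ε, hK, hε, hsub⟩ := hs
        exact ⟨K + closedBall 0 ε, ε, hK.add (isCompact_closedBall _ _), hε,
          entourage_swap.trans (Set.preimage_mono hsub)⟩
      comp := by
        intro s hs
        rw [mem_generate_iff'] at hs
        obtain ⟨K, ε, hK, hε, hsub⟩ := hs
        have hmem : entourage (r := r) (K + closedBall 0 ε) (ε / 2) ∈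
            Filter.generate (entourages d r) :=
          Filter.mem_generate_of_mem
            ⟨K + closedBall 0 ε, ε / 2, hK.add (isCompact_closedBall _ _), by linarith, rfl⟩
        exact Filter.mem_of_superset (Filter.mem_lift' hmem)
          ((entourage_comp hε.le).trans hsub) }

lemma Xuniformity (d : ℕ) (r : ℝ) :
    @uniformity (XType d r) (Xuniform d r) = Filter.generate (entourages d r) := rfl
lemma subset_of_forall_entourage (hr : 0 < r) {S S' : XType d r}
    (h : ∀ K ε, IsCompact (K : Set (Rd d)) → 0 < ε → (S, S') ∈ entourage (r := r) K ε) :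
    S.toSet ⊆ S'.toSet := by
  intro x hx
  have key : ∀ ε : ℝ, 0 < ε → ε ≤ 1 → ∃ p ∈ S'.toSet, dist x p ≤ ε := by
    intro ε hε hε1
    obtain ⟨v, hv, he⟩ := h (closedBall x 1) ε (isCompact_closedBall _ _) hε
    have h1 : v + x ∈ ((fun y => v + y) '' S.toSet) ∩ closedBall x 1 := by
      refine ⟨⟨x, hx, rfl⟩, ?_⟩
      rw [mem_closedBall, dist_eq_norm, add_sub_cancel_right]
      exact hv.trans hε1
    rw [he] at h1
    refine ⟨v + x, h1.1, ?_⟩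
    rw [dist_eq_norm, show x - (v + x) = -v by abel, norm_neg]
    exact hv
  by_contra hxS'
  have hε1 : (0:ℝ) < min (r/4) 1 := lt_min (by linarith) one_pos
  obtain ⟨p, hp, hdp⟩ := key (min (r/4) 1) hε1 (min_le_right _ _)
  have hpx : p ≠ x := fun h => hxS' (h ▸ hp)
  have hd : 0 < dist x p := dist_pos.2 (fun h => hpx h.symm)
  obtain ⟨q, hq, hdq⟩ := key (min (dist x p / 2) (min (r/4) 1))
    (lt_min (by linarith) hε1) ((min_le_right _ _).trans (min_le_right _ _))
  have hqp : q ≠ p := by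
    intro h
    subst h
    have := hdq.trans ((min_le_left _ _))
    linarith
  have hsep := S'.minDist q hq p hp hqp
  have h1 : dist q p ≤ dist q x + dist x p := dist_triangle _ _ _
  have h2 : dist x p ≤ min (r/4) 1 := hdp
  have h3 : dist q x ≤ min (r/4) 1 := by
    rw [dist_comm]; exact hdq.trans ((min_le_right _ _))
  have h4 : min (r/4) 1 ≤ r/4 := min_le_left _ _
  linarith

lemma Xt0 (d : ℕ) (r : ℝ) (hr : 0 < r) :
    @T0Space (XType d r) (Xuniform d r).toTopologicalSpace := by
  letI := Xuniform d r
  rw [t0Space_iff_uniformity]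
  intro S S' h
  have hfwd : ∀ K ε, IsCompact (K : Set (Rd d)) → 0 < ε →
      (S, S') ∈ entourage (r := r) K ε := by
    intro K ε hK hε
    exact h _ (Filter.mem_generate_of_mem ⟨K, ε, hK, hε, rfl⟩)
  have hbwd : ∀ K ε, IsCompact (K : Set (Rd d)) → 0 < ε →
      (S', S) ∈ entourage (r := r) K ε := by
    intro K ε hK hε
    have hmem : Prod.swap ⁻¹' entourage (r := r) K ε ∈ Filter.generate (entourages d r) :=
      Filter.mem_of_superset
        (Filter.mem_generate_of_mem
          ⟨K + closedBall 0 ε, ε, hK.add (isCompact_closedBall _ _), hε, rfl⟩)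
        entourage_swap
    exact h _ hmem
  exact XType.ext' (Set.Subset.antisymm (subset_of_forall_entourage hr hfwd)
    (subset_of_forall_entourage hr hbwd))

lemma Xcomplete (d : ℕ) (r : ℝ) : @CompleteSpace (XType d r) (Xuniform d r) := by
  letI := Xuniform d r
  constructor
  intro f hf
  rw [cauchy_iff] at hf
  obtain ⟨hfne, hfs⟩ := hf
  -- the scale sequence
  set δ : ℕ → ℝ := fun n => (1/16) * (1/2)^n with hδdef
  have hδpos : ∀ n, 0 < δ n := fun n => by positivity
  have hδsum : Summable δ := (summable_geometric_two).mul_left _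
  have hδ1 : ∀ n, δ n ≤ 1/16 := by
    intro n
    have h1 : ((1:ℝ)/2)^n ≤ 1 := pow_le_one₀ (by norm_num) (by norm_num)
    simp only [hδdef]
    nlinarith
  -- Cauchy data
  have hEgen : ∀ n : ℕ, entourage (r := r) (closedBall 0 ((n:ℝ)+2)) (δ n) ∈
      Filter.generate (entourages d r) := fun n =>
    Filter.mem_generate_of_mem ⟨_, _, isCompact_closedBall _ _, hδpos n, rfl⟩
  choose A hAf hAsub using fun n => hfs _ (hEgen n)
  set A' : ℕ → Set (XType d r) := fun n => ⋂ k ∈ Finset.range (n+1), A k with hA'def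
  have hA'f : ∀ n, A' n ∈ f := fun n => (Filter.biInter_finset_mem _).2 fun k _ => hAf k
  have hA'sub : ∀ n, A' n ⊆ A n := fun n x hx =>
    Set.mem_iInter₂.1 hx n (Finset.self_mem_range_succ n)
  have hA'anti : ∀ n, A' (n+1) ⊆ A' n := fun n x hx =>
    Set.mem_iInter₂.2 fun k hk =>
      Set.mem_iInter₂.1 hx k (Finset.mem_range.2 (by have := Finset.mem_range.1 hk; omega))
  choose S hS using fun n => Filter.nonempty_of_mem (hA'f n)
  have hpair : ∀ n : ℕ, (S (n+1), S n) ∈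
      entourage (r := r) (closedBall 0 ((n:ℝ)+2)) (δ n) := fun n =>
    hAsub n (Set.mk_mem_prod (hA'sub n (hA'anti n (hS (n+1)))) (hA'sub n (hS n)))
  choose v hvnorm hveq using hpair
  have hvsum : Summable v := Summable.of_norm_bounded hδsum hvnorm
  -- the corrective translations
  set c : ℕ → Rd d := fun n => -∑' k, v (k + n) with hcdef
  have hδshift : ∀ n, Summable (fun k => δ (k + n)) := fun n => (summable_nat_add_iff n).2 hδsum
  have hnorm_shift : ∀ n, Summable (fun k => ‖v (k + n)‖) := fun n =>
    Summable.of_nonneg_of_le (fun k => norm_nonneg _) (fun k => hvnorm _) (hδshift n)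
  have hδtail : ∀ n, ∑' k, δ (k + n) = 2 * δ n := by
    intro n
    have h1 : ∀ k, δ (k + n) = (1/2:ℝ)^k * δ n := by
      intro k; simp only [hδdef, pow_add]; ring
    calc ∑' k, δ (k + n) = ∑' k : ℕ, (1/2:ℝ)^k * δ n := tsum_congr h1
    _ = (∑' k : ℕ, (1/2:ℝ)^k) * δ n := tsum_mul_right
    _ = 2 * δ n := by rw [tsum_geometric_two]
  have hcnorm : ∀ n, ‖c n‖ ≤ 2 * δ n := by
    intro n
    simp only [hcdef, norm_neg]
    calc ‖∑' k, v (k + n)‖ ≤ ∑' k, ‖v (k + n)‖ := norm_tsum_le_tsum_norm (hnorm_shift n)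
    _ ≤ ∑' k, δ (k + n) := Summable.tsum_le_tsum (fun k => hvnorm _) (hnorm_shift n) (hδshift n)
    _ = 2 * δ n := hδtail n
  have hc1 : ∀ n, ‖c n‖ ≤ 1 := fun n => (hcnorm n).trans (by have := hδ1 n; linarith)
  have hcrec : ∀ n, c (n+1) = c n + v n := by
    intro n
    have hsum2 : Summable (fun k => v ((k+1) + n)) := by
      have h := (summable_nat_add_iff (n+1)).2 hvsum
      have he : (fun k => v (k + (n+1))) = fun k => v ((k+1) + n) :=
        funext fun k => congrArg v (by omega)
      rwa [he] at h
    have h0 : ∑' k, v (k + n) = v (0 + n) + ∑' k, v ((k+1) + n) := tsum_eq_zero_add' hsum2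
    have hidx : (fun k => v (k + (n+1))) = fun k => v ((k+1) + n) :=
      funext fun k => congrArg v (by omega)
    simp only [hcdef]
    rw [hidx, h0, Nat.zero_add]
    abel
  -- the limit construction
  set B : ℕ → Set (Rd d) := fun n => closedBall 0 ((n:ℝ)+1) with hBdef
  set T : ℕ → Set (Rd d) := fun n => (fun x => c n + x) '' (S n).toSet with hTdef
  have hstep : ∀ n, T n ∩ B n = T (n+1) ∩ B n := by
    intro n
    ext x
    simp only [hTdef, hBdef, Set.mem_inter_iff, mem_add_image, mem_closedBall_zero_iff]
    constructor
    · rintro ⟨hxT, hxB⟩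
      have hK : x - c n ∈ closedBall (0:Rd d) ((n:ℝ)+2) := by
        rw [mem_closedBall_zero_iff]
        calc ‖x - c n‖ ≤ ‖x‖ + ‖c n‖ := norm_sub_le _ _
        _ ≤ ((n:ℝ)+1) + 1 := add_le_add hxB (hc1 n)
        _ = (n:ℝ)+2 := by ring
      have h1 : x - c n ∈ (S n).toSet ∩ closedBall 0 ((n:ℝ)+2) := ⟨hxT, hK⟩
      rw [← hveq n] at h1
      have h2 := h1.1
      rw [mem_add_image] at h2
      refine ⟨?_, hxB⟩
      rw [hcrec n, sub_add_eq_sub_sub]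
      exact h2
    · rintro ⟨hxT, hxB⟩
      have hK : x - c n ∈ closedBall (0:Rd d) ((n:ℝ)+2) := by
        rw [mem_closedBall_zero_iff]
        calc ‖x - c n‖ ≤ ‖x‖ + ‖c n‖ := norm_sub_le _ _
        _ ≤ ((n:ℝ)+1) + 1 := add_le_add hxB (hc1 n)
        _ = (n:ℝ)+2 := by ring
      have h1 : x - c n ∈ ((fun y => v n + y) '' (S (n+1)).toSet) ∩
          closedBall 0 ((n:ℝ)+2) := by
        refine ⟨?_, hK⟩
        rw [mem_add_image, sub_sub, ← hcrec n]
        exact hxT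
      rw [hveq n] at h1
      exact ⟨h1.1, hxB⟩
  have hstab : ∀ n m, n ≤ m → T m ∩ B n = T n ∩ B n := by
    intro n m hnm
    induction m, hnm using Nat.le_induction with
    | base => rfl
    | succ m hnm ih =>
      have hBsub : B n ⊆ B m := closedBall_subset_closedBall
        (by have := (Nat.cast_le (α := ℝ)).2 hnm; linarith)
      calc T (m+1) ∩ B n = T (m+1) ∩ (B m ∩ B n) := by
            rw [Set.inter_eq_self_of_subset_right hBsub]
      _ = (T (m+1) ∩ B m) ∩ B n := by rw [Set.inter_assoc]
      _ = (T m ∩ B m) ∩ B n := by rw [← hstep m]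
      _ = T m ∩ (B m ∩ B n) := by rw [Set.inter_assoc]
      _ = T m ∩ B n := by rw [Set.inter_eq_self_of_subset_right hBsub]
      _ = T n ∩ B n := ih
  set Λs : Set (Rd d) := ⋃ n, T n ∩ B n with hΛdef
  have hΛB : ∀ n, Λs ∩ B n = T n ∩ B n := by
    intro n
    apply Set.Subset.antisymm
    · rintro x ⟨hxU, hxB⟩
      rw [hΛdef, Set.mem_iUnion] at hxU
      obtain ⟨m, hxT, hxB'⟩ := hxU
      rcases le_total m n with h | h
      · have hx2 : x ∈ T n ∩ B m := by rw [hstab m n h]; exact ⟨hxT, hxB'⟩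
        exact ⟨hx2.1, hxB⟩
      · have hx2 : x ∈ T n ∩ B n := by rw [← hstab n m h]; exact ⟨hxT, hxB⟩
        exact ⟨hx2.1, hxB⟩
    · intro x hx
      exact ⟨Set.mem_iUnion.2 ⟨n, hx⟩, hx.2⟩
  have hmin : ∀ x ∈ Λs, ∀ y ∈ Λs, x ≠ y → r ≤ dist x y := by
    intro x hx y hy hxy
    rw [hΛdef, Set.mem_iUnion] at hx hy
    obtain ⟨a, hxa⟩ := hx
    obtain ⟨b, hyb⟩ := hy
    have hBa : B a ⊆ B (max a b) := closedBall_subset_closedBall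
      (by have := (Nat.cast_le (α := ℝ)).2 (le_max_left a b); linarith)
    have hBb : B b ⊆ B (max a b) := closedBall_subset_closedBall
      (by have := (Nat.cast_le (α := ℝ)).2 (le_max_right a b); linarith)
    have hxN : x ∈ T (max a b) ∩ B (max a b) := by
      rw [← hΛB (max a b)]
      exact ⟨Set.mem_iUnion.2 ⟨a, hxa⟩, hBa hxa.2⟩
    have hyN : y ∈ T (max a b) ∩ B (max a b) := by
      rw [← hΛB (max a b)]
      exact ⟨Set.mem_iUnion.2 ⟨b, hyb⟩, hBb hyb.2⟩
    obtain ⟨s, hsS, rfl⟩ := hxN.1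
    obtain ⟨t, htS, rfl⟩ := hyN.1
    have hst : s ≠ t := fun h => hxy (by rw [h])
    have := (S (max a b)).minDist s hsS t htS hst
    rwa [dist_add_left]
  refine ⟨⟨Λs, hmin⟩, ?_⟩
  -- convergence
  intro sset hsset
  rw [nhds_eq_comap_uniformity, Filter.mem_comap] at hsset
  obtain ⟨t, ht, hsub⟩ := hsset
  obtain ⟨K, ε, hKc, hε, hKsub⟩ := mem_generate_iff'.1 ht
  obtain ⟨R, hR⟩ := hKc.isBounded.subset_closedBall 0
  obtain ⟨n, hn⟩ := exists_nat_ge R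
  have hKB : K ⊆ B n := hR.trans (closedBall_subset_closedBall (by linarith))
  obtain ⟨m0, hm0⟩ := exists_pow_lt_of_lt_one hε (by norm_num : (1/2:ℝ) < 1)
  have hδm : δ (max (n+1) m0) ≤ δ m0 := by
    simp only [hδdef]
    have := pow_le_pow_of_le_one (by norm_num : (0:ℝ) ≤ 1/2) (by norm_num : (1/2:ℝ) ≤ 1)
      (le_max_right (n+1) m0)
    nlinarith
  set m := max (n+1) m0 with hmdef
  have h3δ : 3 * δ m ≤ ε := by
    have h1 : δ m0 ≤ (1/2:ℝ)^m0 * (1/16) := by simp only [hδdef]; nlinarith [pow_pos (by norm_num : (0:ℝ) < 1/2) m0]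
    have h2 : (1/2:ℝ)^m0 ≤ ε := hm0.le
    have h3 : (0:ℝ) < (1/2:ℝ)^m0 := pow_pos (by norm_num) m0
    nlinarith [hδm, hδpos m]
  have hnm : (n:ℝ) + 2 ≤ (m:ℝ) + 1 := by
    have h : n + 1 ≤ m := le_max_left _ _
    have h2 : ((n:ℝ) + 1) ≤ (m:ℝ) := by exact_mod_cast Nat.cast_le.2 h
    linarith
  apply Filter.mem_of_superset (hA'f m)
  intro S' hS'
  apply hsub
  apply hKsub
  have hpair' : (S m, S') ∈ entourage (r := r) (closedBall 0 ((m:ℝ)+2)) (δ m) :=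
    hAsub m (Set.mk_mem_prod (hA'sub m (hS m)) (hA'sub m hS'))
  obtain ⟨u₀, hu₀, hueq⟩ := hpair'
  have hwb : ‖u₀ - c m‖ ≤ 3 * δ m := by
    calc ‖u₀ - c m‖ ≤ ‖u₀‖ + ‖c m‖ := norm_sub_le _ _
    _ ≤ δ m + 2 * δ m := add_le_add hu₀ (hcnorm m)
    _ = 3 * δ m := by ring
  have hw1 : ‖u₀ - c m‖ ≤ 1 := hwb.trans (by have := hδ1 m; linarith)
  refine ⟨u₀ - c m, hwb.trans h3δ, ?_⟩
  ext y
  simp only [Set.mem_inter_iff, mem_add_image]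
  constructor
  · rintro ⟨hyΛ, hyK⟩
    have hyB : ‖y‖ ≤ (n:ℝ)+1 := mem_closedBall_zero_iff.1 (hKB hyK)
    have hxB : y - (u₀ - c m) ∈ B m := by
      rw [hBdef, mem_closedBall_zero_iff]
      calc ‖y - (u₀ - c m)‖ ≤ ‖y‖ + ‖u₀ - c m‖ := norm_sub_le _ _
      _ ≤ ((n:ℝ)+1) + 1 := add_le_add hyB hw1
      _ ≤ (m:ℝ)+1 := by linarith
    have hxT : y - (u₀ - c m) ∈ T m ∩ B m := by
      rw [← hΛB m]
      exact ⟨hyΛ, hxB⟩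
    have hxs : y - (u₀ - c m) - c m ∈ (S m).toSet := by
      have := hxT.1
      rw [hTdef, mem_add_image] at this
      exact this
    have hyKm : y ∈ closedBall (0:Rd d) ((m:ℝ)+2) := by
      rw [mem_closedBall_zero_iff]; linarith
    have h1 : y ∈ ((fun z => u₀ + z) '' (S m).toSet) ∩ closedBall 0 ((m:ℝ)+2) := by
      refine ⟨?_, hyKm⟩
      rw [mem_add_image, show y - u₀ = y - (u₀ - c m) - c m from by abel]
      exact hxs
    rw [hueq] at h1
    exact ⟨h1.1, hyK⟩
  · rintro ⟨hyS', hyK⟩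
    have hyB : ‖y‖ ≤ (n:ℝ)+1 := mem_closedBall_zero_iff.1 (hKB hyK)
    have hyKm : y ∈ closedBall (0:Rd d) ((m:ℝ)+2) := by
      rw [mem_closedBall_zero_iff]; linarith
    have h1 : y ∈ S'.toSet ∩ closedBall 0 ((m:ℝ)+2) := ⟨hyS', hyKm⟩
    rw [← hueq] at h1
    have h2 := h1.1
    rw [mem_add_image] at h2
    have hxT : y - (u₀ - c m) ∈ T m := by
      rw [hTdef, mem_add_image, show y - (u₀ - c m) - c m = y - u₀ from by abel]
      exact h2
    have hxB : y - (u₀ - c m) ∈ B m := by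
      rw [hBdef, mem_closedBall_zero_iff]
      calc ‖y - (u₀ - c m)‖ ≤ ‖y‖ + ‖u₀ - c m‖ := norm_sub_le _ _
      _ ≤ ((n:ℝ)+1) + 1 := add_le_add hyB hw1
      _ ≤ (m:ℝ)+1 := by linarith
    exact ⟨Set.mem_iUnion.2 ⟨m, hxT, hxB⟩, hyK⟩

end XHelp


/-- `X(r)`, with the uniformity generated by the entourages `U(K, ε)`,
is a complete Hausdorff uniform space. -/
theorem Xspace_completeSpace_t2Space (d : ℕ) (r : ℝ) (hr : 0 < r) :
    ∃ u : UniformSpace (XType d r),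
      @uniformity (XType d r) u = Filter.generate (entourages d r) ∧
      @CompleteSpace (XType d r) u ∧
      @T2Space (XType d r) u.toTopologicalSpace := by
  refine ⟨XHelp.Xuniform d r, rfl, XHelp.Xcomplete d r, ?_⟩
  letI := XHelp.Xuniform d r
  haveI := XHelp.Xt0 d r hr
  infer_instance
end
end

section
/- Let S ∈ X(r) be a Delone set in ℝ^d. Then the closure of LI(S) in X(r) is compact if and only if S has finite local complexity, i.e. the closure of S − S in ℝ^d is discrete. -/
open scoped Pointwise
open Metric MeasureTheory Filter Topology

noncomputable section

/-- Two sets are locally isomorphic if each finite patch of one occurs, up to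
translation, in the other. -/
def LocIso {d : ℕ} (S S' : Set (Rd d)) : Prop :=
  (∀ ρ > (0:ℝ), ∀ v : Rd d, ∃ w : Rd d,
    ((fun x => x - v) '' S) ∩ closedBall (0 : Rd d) ρ
      = ((fun x => x - w) '' S') ∩ closedBall (0 : Rd d) ρ) ∧
  (∀ ρ > (0:ℝ), ∀ v : Rd d, ∃ w : Rd d,
    ((fun x => x - v) '' S') ∩ closedBall (0 : Rd d) ρ
      = ((fun x => x - w) '' S) ∩ closedBall (0 : Rd d) ρ)

/-- The local isomorphism class of `S` inside `X(r)`. -/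
def LIclass {d : ℕ} {r : ℝ} (S : XType d r) : Set (XType d r) :=
  {S' | LocIso S.toSet S'.toSet}

/-- The translation orbit of `S` inside `X(r)`. -/
def orbitXT {d : ℕ} {r : ℝ} (S : XType d r) : Set (XType d r) :=
  {S' | ∃ t : Rd d, S'.toSet = (fun x => t + x) '' S.toSet}


section helper
variable {d : ℕ} {r : ℝ}

lemma inter_restrict {α : Type*} {X Y K K' : Set α} (hK : K ⊆ K')
    (h : X ∩ K' = Y ∩ K') : X ∩ K = Y ∩ K := by
  ext x
  constructor
  · rintro ⟨hx, hk⟩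
    have : x ∈ Y ∩ K' := h ▸ ⟨hx, hK hk⟩
    exact ⟨this.1, hk⟩
  · rintro ⟨hx, hk⟩
    have : x ∈ X ∩ K' := h.symm ▸ ⟨hx, hK hk⟩
    exact ⟨this.1, hk⟩

lemma entourage_mono {K K' : Set (Rd d)} {ε ε' : ℝ} (hK : K ⊆ K') (hε : ε' ≤ ε) :
    (entourage K' ε' : Set (XType d r × XType d r)) ⊆ entourage K ε := by
  rintro ⟨A, B⟩ ⟨v, hv, hAB⟩
  exact ⟨v, hv.trans hε, inter_restrict hK hAB⟩

lemma entourage_mem_uniformity [u : UniformSpace (XType d r)]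
    (hu : uniformity (XType d r) = Filter.generate (entourages d r))
    {K : Set (Rd d)} {ε : ℝ} (hK : IsCompact K) (hε : 0 < ε) :
    entourage K ε ∈ uniformity (XType d r) := by
  rw [hu]
  exact (Filter.le_generate_iff.mp le_rfl) ⟨K, ε, hK, hε, rfl⟩

lemma entourage_symm {ρ ε : ℝ} {A B : XType d r}
    (h : (A, B) ∈ (entourage (closedBall (0 : Rd d) (ρ + ε)) ε : Set _)) :
    (B, A) ∈ (entourage (closedBall (0 : Rd d) ρ) ε : Set _) := by
  obtain ⟨v, hv, hAB⟩ := h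
  refine ⟨-v, by simpa using hv, ?_⟩
  ext x
  simp only [Set.mem_inter_iff, Set.mem_image, mem_closedBall_zero_iff]
  constructor
  · rintro ⟨⟨b, hb, rfl⟩, hx⟩
    have hb' : b ∈ B.toSet ∩ closedBall (0 : Rd d) (ρ + ε) := by
      refine ⟨hb, mem_closedBall_zero_iff.2 ?_⟩
      calc ‖b‖ = ‖v + (-v + b)‖ := by rw [add_neg_cancel_left]
        _ ≤ ‖-v + b‖ + ‖v‖ := by
              rw [add_comm]; exact norm_add_le _ _
        _ ≤ ρ + ε := add_le_add hx hv
    rw [← hAB] at hb'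
    obtain ⟨⟨a, ha, rfl⟩, -⟩ := hb'
    refine ⟨?_, hx⟩
    rw [neg_add_cancel_left]
    exact ha
  · rintro ⟨ha, hx⟩
    have hva : v + x ∈ ((fun x => v + x) '' A.toSet) ∩ closedBall (0 : Rd d) (ρ + ε) := by
      refine ⟨⟨x, ha, rfl⟩, mem_closedBall_zero_iff.2 ?_⟩
      calc ‖v + x‖ ≤ ‖v‖ + ‖x‖ := norm_add_le _ _
        _ ≤ ε + ρ := by
            refine add_le_add hv ?_
            simpa using hx
        _ = ρ + ε := by ring
    rw [hAB] at hva
    exact ⟨⟨v + x, hva.1, by abel⟩, hx⟩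

lemma entourage_comp {ρ ε₁ ε₂ : ℝ} {A B C : XType d r}
    (h₁ : (A, B) ∈ (entourage (closedBall (0 : Rd d) (ρ + ε₂)) ε₁ : Set _))
    (h₂ : (B, C) ∈ (entourage (closedBall (0 : Rd d) ρ) ε₂ : Set _)) :
    (A, C) ∈ (entourage (closedBall (0 : Rd d) ρ) (ε₁ + ε₂) : Set _) := by
  obtain ⟨u', hu', hAB⟩ := h₁
  obtain ⟨w, hw, hBC⟩ := h₂
  refine ⟨w + u', (norm_add_le _ _).trans (by linarith), ?_⟩
  have hKK : ∀ x : Rd d, ‖x‖ ≤ ρ → ‖x - w‖ ≤ ρ + ε₂ := fun x hx =>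
    (norm_sub_le _ _).trans (add_le_add hx hw)
  ext x
  simp only [Set.mem_inter_iff, Set.mem_image, mem_closedBall_zero_iff]
  constructor
  · rintro ⟨⟨a, ha, rfl⟩, hx⟩
    have h1 : u' + a ∈ ((fun x => u' + x) '' A.toSet) ∩ closedBall (0 : Rd d) (ρ + ε₂) := by
      refine ⟨⟨a, ha, rfl⟩, mem_closedBall_zero_iff.2 ?_⟩
      have : u' + a = (w + u' + a) - w := by abel
      rw [this]; exact hKK _ hx
    rw [hAB] at h1
    have h2 : w + (u' + a) ∈ ((fun x => w + x) '' B.toSet) ∩ closedBall (0 : Rd d) ρ := by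
      refine ⟨⟨u' + a, h1.1, rfl⟩, mem_closedBall_zero_iff.2 (by rwa [← add_assoc])⟩
    rw [hBC] at h2
    rw [add_assoc]
    exact ⟨h2.1, by rwa [← add_assoc]⟩
  · rintro ⟨hxC, hx⟩
    have h2 : x ∈ ((fun x => w + x) '' B.toSet) ∩ closedBall (0 : Rd d) ρ := by
      rw [hBC]; exact ⟨hxC, mem_closedBall_zero_iff.2 hx⟩
    obtain ⟨⟨b, hb, rfl⟩, -⟩ := h2
    have h1 : b ∈ B.toSet ∩ closedBall (0 : Rd d) (ρ + ε₂) := by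
      refine ⟨hb, mem_closedBall_zero_iff.2 ?_⟩
      have : b = (w + b) - w := by abel
      rw [this]; exact hKK _ hx
    rw [← hAB] at h1
    obtain ⟨⟨a, ha, rfl⟩, -⟩ := h1
    exact ⟨⟨a, ha, by abel⟩, hx⟩

end helper

section helper2
variable {d : ℕ} {r : ℝ}

lemma tendsto_iff_entourage [u : UniformSpace (XType d r)]
    (hu : uniformity (XType d r) = Filter.generate (entourages d r))
    {f : ℕ → XType d r} {T : XType d r} :
    Tendsto f atTop (nhds T) ↔
      ∀ ρ > (0:ℝ), ∀ ε > (0:ℝ), ∀ᶠ n in atTop,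
        (T, f n) ∈ (entourage (closedBall (0 : Rd d) ρ) ε : Set _) := by
  rw [nhds_eq_comap_uniformity, Filter.tendsto_comap_iff]
  constructor
  · intro h ρ hρ ε hε
    exact h (entourage_mem_uniformity hu (isCompact_closedBall _ _) hε)
  · intro h
    rw [show (Prod.mk T ∘ f) = fun n => (T, f n) from rfl, Filter.Tendsto, hu,
      Filter.le_generate_iff]
    rintro E ⟨K, ε, hK, hε, rfl⟩
    obtain ⟨ρ, hρ⟩ := hK.isBounded.subset_closedBall 0
    have := h (max ρ 1) (lt_of_lt_of_le one_pos (le_max_right _ _)) ε hε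
    exact this.mono fun n hn =>
      entourage_mono (hρ.trans (closedBall_subset_closedBall (le_max_left _ _))) le_rfl hn

lemma uniformity_countably_generated [u : UniformSpace (XType d r)]
    (hu : uniformity (XType d r) = Filter.generate (entourages d r)) :
    (uniformity (XType d r)).IsCountablyGenerated := by
  constructor
  refine ⟨(fun p : ℕ × ℕ =>
      (entourage (closedBall (0 : Rd d) (p.1 + 1)) (1 / (p.2 + 1)) : Set _)) '' Set.univ,
    (Set.countable_univ.image _), ?_⟩
  rw [hu]
  apply le_antisymm
  · rw [Filter.le_generate_iff]
    rintro E ⟨⟨n, m⟩, -, rfl⟩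
    exact (Filter.le_generate_iff.mp le_rfl)
      ⟨_, _, isCompact_closedBall _ _, by positivity, rfl⟩
  · rw [Filter.le_generate_iff]
    rintro E ⟨K, ε, hK, hε, rfl⟩
    obtain ⟨ρ, hρ⟩ := hK.isBounded.subset_closedBall 0
    obtain ⟨n, hn⟩ := exists_nat_ge ρ
    obtain ⟨m, hm⟩ := exists_nat_one_div_lt hε
    have hbasic : (entourage (closedBall (0 : Rd d) (n + 1)) (1 / (m + 1)) : Set _)
        ∈ Filter.generate ((fun p : ℕ × ℕ =>
          (entourage (closedBall (0 : Rd d) (p.1 + 1)) (1 / (p.2 + 1)) :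
            Set (XType d r × XType d r))) '' Set.univ) :=
      (Filter.le_generate_iff.mp le_rfl) ⟨(n, m), Set.mem_univ _, rfl⟩
    refine Filter.mem_of_superset hbasic (entourage_mono ?_ hm.le)
    exact hρ.trans (closedBall_subset_closedBall (by linarith))

/-- translate of an `XType`. -/
def XType.tr (A : XType d r) (t : Rd d) : XType d r where
  toSet := (fun x => t + x) '' A.toSet
  minDist := by
    rintro _ ⟨a, ha, rfl⟩ _ ⟨b, hb, rfl⟩ hne
    have hab : a ≠ b := fun h => hne (by rw [h])
    simpa [dist_add_left] using A.minDist a ha b hb hab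

lemma diagAux_exists (P : ℕ → (ℕ → ℕ) → Prop)
    (hex : ∀ m (f : ℕ → ℕ), StrictMono f → ∃ g, StrictMono g ∧ P m (f ∘ g)) :
    ∃ f : ℕ → ℕ, StrictMono f ∧ ∀ m, ∃ f' : ℕ → ℕ, StrictMono f' ∧ P m f' ∧
      ∀ k, m ≤ k → ∃ j, k ≤ j ∧ f k = f' j := by
  choose g hg hP using hex
  let Ψ : ℕ → {f : ℕ → ℕ // StrictMono f} := fun m =>
    Nat.rec ⟨g 0 id strictMono_id, (hg 0 id strictMono_id).comp strictMono_id⟩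
      (fun m prev => ⟨prev.1 ∘ g (m+1) prev.1 prev.2,
        prev.2.comp (hg (m+1) prev.1 prev.2)⟩) m
  have hΨsucc : ∀ m, (Ψ (m+1)).1 = (Ψ m).1 ∘ g (m+1) (Ψ m).1 (Ψ m).2 := fun m => rfl
  have hΨP : ∀ m, P m (Ψ m).1 := by
    intro m
    cases m with
    | zero => exact hP 0 id strictMono_id
    | succ m => exact hP (m+1) (Ψ m).1 (Ψ m).2
  have hlink : ∀ m n, m ≤ n → ∀ i, ∃ j, i ≤ j ∧ (Ψ n).1 i = (Ψ m).1 j := by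
    intro m n hmn
    induction n, hmn using Nat.le_induction with
    | base => exact fun i => ⟨i, le_rfl, rfl⟩
    | succ n hmn ih =>
      intro i
      obtain ⟨j, hj, hval⟩ := ih (g (n+1) (Ψ n).1 (Ψ n).2 i)
      refine ⟨j, le_trans (StrictMono.le_apply (hg (n+1) (Ψ n).1 (Ψ n).2)) hj, ?_⟩
      rw [hΨsucc n]
      exact hval
  refine ⟨fun k => (Ψ k).1 k, ?_, ?_⟩
  · apply strictMono_nat_of_lt_succ
    intro k
    calc (Ψ k).1 k < (Ψ k).1 (k+1) := (Ψ k).2 (Nat.lt_succ_self k)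
      _ ≤ (Ψ k).1 (g (k+1) (Ψ k).1 (Ψ k).2 (k+1)) :=
          (Ψ k).2.monotone (StrictMono.le_apply (hg (k+1) (Ψ k).1 (Ψ k).2))
      _ = (Ψ (k+1)).1 (k+1) := rfl
  · intro m
    refine ⟨(Ψ m).1, (Ψ m).2, hΨP m, ?_⟩
    intro k hk
    obtain ⟨j, hj, hval⟩ := hlink m k hk k
    exact ⟨j, hj, hval⟩

end helper2

section helper3
variable {d : ℕ} {r : ℝ}

lemma tr_mem_LIclass (S : XType d r) (t : Rd d) : S.tr t ∈ LIclass S := by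
  constructor
  · intro ρ hρ v
    refine ⟨v + t, ?_⟩
    congr 1
    show _ = (fun x => x - (v + t)) '' ((fun x => t + x) '' S.toSet)
    rw [Set.image_image]
    apply Set.image_congr'
    intro x
    abel
  · intro ρ hρ v
    refine ⟨v - t, ?_⟩
    congr 1
    show (fun x => x - v) '' ((fun x => t + x) '' S.toSet) = _
    rw [Set.image_image]
    apply Set.image_congr'
    intro x
    abel

lemma patch_of_mem_LIclass {S T : XType d r} (hT : T ∈ LIclass S) {ρ : ℝ} (hρ : 0 < ρ) :
    ∃ w, T.toSet ∩ closedBall (0 : Rd d) ρ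
      = ((fun x => x - w) '' S.toSet) ∩ closedBall (0 : Rd d) ρ := by
  obtain ⟨w, h⟩ := hT.2 ρ hρ 0
  refine ⟨w, ?_⟩
  rw [← h]
  congr 1
  simp [Set.image_id']

lemma patch_nonempty {S : XType d r} {R : ℝ}
    (hdense : ∀ x : Rd d, ∃ y ∈ S.toSet, dist x y ≤ R) (w : Rd d) {ρ : ℝ} (hρ : R ≤ ρ) :
    (((fun x => x - w) '' S.toSet) ∩ closedBall (0 : Rd d) ρ).Nonempty := by
  obtain ⟨y, hy, hdist⟩ := hdense w
  refine ⟨y - w, ⟨y, hy, rfl⟩, mem_closedBall_zero_iff.2 ?_⟩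
  calc ‖y - w‖ = dist y w := by rw [dist_eq_norm]
    _ = dist w y := dist_comm _ _
    _ ≤ ρ := hdist.trans hρ

lemma flc_finite {S : XType d r}
    (hd : DiscreteTopology ↥(closure (S.toSet - S.toSet))) (ρ : ℝ) :
    (closure (S.toSet - S.toSet) ∩ closedBall (0 : Rd d) ρ).Finite := by
  apply IsCompact.finite
  · exact (isCompact_closedBall _ _).inter_left isClosed_closure
  · exact ⟨DiscreteTopology.of_subset hd Set.inter_subset_left⟩

lemma small_points_eq {T : XType d r} (hr : 0 < r) {c t₁ t₂ : Rd d}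
    (h₁ : t₁ ∈ T.toSet) (h₂ : t₂ ∈ T.toSet)
    (hd₁ : dist t₁ c ≤ r/3) (hd₂ : dist t₂ c ≤ r/3) : t₁ = t₂ := by
  by_contra hne
  have := T.minDist t₁ h₁ t₂ h₂ hne
  have : dist t₁ t₂ ≤ 2*r/3 := by
    calc dist t₁ t₂ ≤ dist t₁ c + dist c t₂ := dist_triangle _ _ _
      _ ≤ r/3 + r/3 := add_le_add hd₁ (by rwa [dist_comm])
      _ = 2*r/3 := by ring
  linarith

end helper3

section dir1
variable {d : ℕ} {r : ℝ}

lemma one_div_nat_mono {m m' : ℕ} (h : m ≤ m') : 1/((m':ℝ)+1) ≤ 1/((m:ℝ)+1) := by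
  apply one_div_le_one_div_of_le (by positivity)
  exact_mod_cast by omega

lemma dir1 [u : UniformSpace (XType d r)]
    (hu : uniformity (XType d r) = Filter.generate (entourages d r))
    (hr : 0 < r) (S : XType d r)
    (hc : IsCompact (closure (LIclass S))) :
    DiscreteTopology ↥(closure (S.toSet - S.toSet)) := by
  by_contra hnd
  rw [discreteTopology_subtype_iff] at hnd
  push_neg at hnd
  obtain ⟨x, hxC, hne⟩ := hnd
  -- accumulation: ∀ ε > 0, ∃ z ∈ S - S, z ≠ x ∧ dist z x < ε
  have hacc : ∀ ε > (0:ℝ), ∃ z ∈ S.toSet - S.toSet, z ≠ x ∧ dist z x < ε := by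
    have hxcl : x ∈ closure ({x}ᶜ ∩ closure (S.toSet - S.toSet)) := by
      rw [mem_closure_iff_nhdsWithin_neBot]
      have : 𝓝[({x}ᶜ ∩ closure (S.toSet - S.toSet))] x
          = 𝓝[≠] x ⊓ Filter.principal (closure (S.toSet - S.toSet)) := by
        rw [nhdsWithin, nhdsWithin, ← Filter.inf_principal, inf_assoc]
      rw [this]
      exact hne
    intro ε hε
    obtain ⟨y, ⟨hyne, hyC⟩, hydist⟩ := Metric.mem_closure_iff.mp hxcl (ε/2) (by positivity)
    have hyx : (0:ℝ) < dist x y := by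
      rw [dist_pos]
      exact fun h => hyne (by rw [← h]; rfl)
    obtain ⟨z, hz, hzdist⟩ := Metric.mem_closure_iff.mp hyC
      (min (dist x y) (ε/2)) (lt_min hyx (by positivity))
    refine ⟨z, hz, ?_, ?_⟩
    · intro hzx
      subst hzx
      have := lt_min_iff.mp hzdist
      rw [dist_comm] at this
      exact absurd this.1 (lt_irrefl _)
    · calc dist z x ≤ dist z y + dist y x := dist_triangle _ _ _
        _ < min (dist x y) (ε/2) + ε/2 := by
            rw [dist_comm y x]
            exact add_lt_add_of_lt_of_le (by rwa [dist_comm]) hydist.le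
        _ ≤ ε/2 + ε/2 := by
            exact add_le_add (min_le_right _ _) le_rfl
        _ = ε := by ring
  have hchoice : ∀ n : ℕ, ∃ z ∈ S.toSet - S.toSet, z ≠ x ∧ dist z x < 1/(n+1) :=
    fun n => hacc (1/(n+1)) (by positivity)
  choose z hzmem hznex hzdist using hchoice
  have htendz : Tendsto z atTop (𝓝 x) := by
    apply tendsto_iff_dist_tendsto_zero.2
    apply squeeze_zero (fun n => dist_nonneg) (fun n => (hzdist n).le)
    exact tendsto_one_div_add_atTop_nhds_zero_nat
  have hab : ∀ n, ∃ a ∈ S.toSet, ∃ b ∈ S.toSet, a - b = z n := fun n =>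
    Set.mem_sub.mp (hzmem n)
  choose a ha b hb habz using hab
  set Tn : ℕ → XType d r := fun n => S.tr (-(b n)) with hTn
  have hTnLI : ∀ n, Tn n ∈ LIclass S := fun n => tr_mem_LIclass S _
  have hTn0 : ∀ n, (0 : Rd d) ∈ (Tn n).toSet := fun n => ⟨b n, hb n, by abel⟩
  have hTnz : ∀ n, z n ∈ (Tn n).toSet := fun n =>
    ⟨a n, ha n, by rw [← habz n]; abel⟩
  haveI := uniformity_countably_generated hu
  obtain ⟨T, hTmem, φ, hφ, hconv⟩ :=
    hc.isSeqCompact (fun n => subset_closure (hTnLI n))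
  have hent := (tendsto_iff_entourage hu).1 hconv
  set ρ : ℝ := ‖x‖ + r + 1 with hρdef
  have hρ : 0 < ρ := by positivity
  -- extract small point from entourage relation
  have hpoint : ∀ ε > (0:ℝ), ∀ᶠ n in atTop, ∃ v : Rd d, ‖v‖ ≤ ε ∧ -v ∈ T.toSet ∧
      ((fun y => v + y) '' T.toSet) ∩ closedBall (0:Rd d) ρ
        = (Tn (φ n)).toSet ∩ closedBall (0:Rd d) ρ := by
    intro ε hε
    refine (hent ρ hρ ε hε).mono fun n hn => ?_
    obtain ⟨v, hv, heq⟩ := hn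
    refine ⟨v, hv, ?_, heq⟩
    have h0 : (0:Rd d) ∈ (Tn (φ n)).toSet ∩ closedBall (0:Rd d) ρ :=
      ⟨hTn0 _, mem_closedBall_zero_iff.2 (by rw [norm_zero]; exact hρ.le)⟩
    have heq' : ((fun x => v + x) '' T.toSet) ∩ closedBall (0:Rd d) ρ
        = (Tn (φ n)).toSet ∩ closedBall (0:Rd d) ρ := heq
    rw [← heq'] at h0
    obtain ⟨⟨t, ht, hvt⟩, -⟩ := h0
    have : t = -v := by
      have := hvt
      simp only at this
      linear_combination (norm := abel_nf) this
    rwa [← this]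
  have hsmall : ∀ m : ℕ, ∃ t ∈ T.toSet, ‖t‖ ≤ 1/((m:ℝ)+1) := by
    intro m
    obtain ⟨n, hn⟩ := (hpoint (1/((m:ℝ)+1)) (by positivity)).exists
    obtain ⟨v, hv, hvT, -⟩ := hn
    exact ⟨-v, hvT, by rwa [norm_neg]⟩
  obtain ⟨m₀, hm₀⟩ : ∃ m₀ : ℕ, 1/((m₀:ℝ)+1) ≤ r/3 := by
    obtain ⟨m₀, hm₀⟩ := exists_nat_one_div_lt (show (0:ℝ) < r/3 by positivity)
    exact ⟨m₀, hm₀.le⟩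
  obtain ⟨t₀, ht₀T, ht₀⟩ := hsmall m₀
  have ht₀0 : t₀ = 0 := by
    by_contra h0
    obtain ⟨m, hm⟩ := exists_nat_one_div_lt (show (0:ℝ) < ‖t₀‖ by
      rwa [norm_pos_iff])
    obtain ⟨t', ht'T, ht'⟩ := hsmall (max m m₀)
    have heq : t₀ = t' := by
      apply small_points_eq (T := T) hr (c := 0) ht₀T ht'T
      · rw [dist_zero_right]
        exact ht₀.trans hm₀
      · rw [dist_zero_right]
        exact le_trans ht' (le_trans (one_div_nat_mono (le_max_right m m₀)) hm₀)
    rw [heq] at hm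
    have h1 := le_trans ht' (one_div_nat_mono (le_max_left m m₀))
    linarith
  rw [ht₀0] at ht₀T
  -- now force v = 0 eventually
  have hzφ : Tendsto (fun n => z (φ n)) atTop (𝓝 x) := htendz.comp hφ.tendsto_atTop
  have hev2 : ∀ᶠ n in atTop, dist (z (φ n)) x ≤ min (r/3) 1 := by
    refine (Metric.tendsto_nhds.mp hzφ (min (r/3) 1) (by positivity)).mono fun n hn => hn.le
  have hev := (hpoint (r/3) (by positivity)).and hev2
  obtain ⟨N, hN⟩ := Filter.eventually_atTop.mp hev
  have hzT : ∀ n, N ≤ n → z (φ n) ∈ T.toSet ∧ dist (z (φ n)) x ≤ r/3 := by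
    intro n hn
    obtain ⟨⟨v, hv, hvT, heq⟩, hdist⟩ := hN n hn
    have hv0 : v = 0 := by
      have : -v = 0 := small_points_eq (T := T) hr (c := 0) hvT ht₀T
        (by rwa [dist_zero_right, norm_neg]) (by rw [dist_self]; positivity)
      simpa using this
    subst hv0
    have himg : ((fun y => (0:Rd d) + y) '' T.toSet) = T.toSet := by
      simp [Set.image_id']
    rw [himg] at heq
    have hzball : z (φ n) ∈ closedBall (0:Rd d) ρ := by
      rw [mem_closedBall_zero_iff]
      calc ‖z (φ n)‖ = ‖z (φ n) - x + x‖ := by rw [sub_add_cancel]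
        _ ≤ ‖z (φ n) - x‖ + ‖x‖ := norm_add_le _ _
        _ ≤ 1 + ‖x‖ := by
            rw [← dist_eq_norm]
            exact add_le_add (hdist.trans (min_le_right _ _)) le_rfl
        _ ≤ ρ := by rw [hρdef]; linarith
    have : z (φ n) ∈ T.toSet ∩ closedBall (0:Rd d) ρ := by
      rw [heq]; exact ⟨hTnz _, hzball⟩
    exact ⟨this.1, hdist.trans (min_le_left _ _)⟩
  have hconst : ∀ n, N ≤ n → z (φ n) = z (φ N) := by
    intro n hn
    exact small_points_eq (T := T) hr (c := x) (hzT n hn).1 (hzT N le_rfl).1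
      (hzT n hn).2 (hzT N le_rfl).2
  have : Tendsto (fun n => z (φ n)) atTop (𝓝 (z (φ N))) := by
    apply Tendsto.congr' _ tendsto_const_nhds
    filter_upwards [Filter.eventually_atTop.mpr ⟨N, fun n hn => hconst n hn⟩] with n hn
    exact hn.symm
  exact hznex (φ N) (tendsto_nhds_unique this hzφ)

end dir1

section extract
variable {d : ℕ}

lemma level_extract (D : Set (Rd d)) (hD : D.Finite) (ρ : ℝ)
    (Fs : ℕ → Set (Rd d)) (hFs : ∀ n, Fs n ⊆ D)
    (pt : ℕ → Rd d) (hpt : ∀ n, pt n ∈ closedBall (0:Rd d) ρ) :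
    ∃ g : ℕ → ℕ, StrictMono g ∧ (∃ F, ∀ k, Fs (g k) = F) ∧
      ∃ p, Tendsto (fun k => pt (g k)) atTop (𝓝 p) := by
  have hfin : {t : Set (Rd d) | t ⊆ D}.Finite := hD.finite_subsets
  haveI : Finite ↥{t : Set (Rd d) | t ⊆ D} := hfin.to_subtype
  obtain ⟨F₀, hF₀⟩ := Finite.exists_infinite_fiber
    (fun n : ℕ => (⟨Fs n, hFs n⟩ : ↥{t : Set (Rd d) | t ⊆ D}))
  have hfreq : ∃ᶠ n in atTop, Fs n = F₀.1 := by
    rw [Nat.frequently_atTop_iff_infinite]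
    have hinf : ((fun n : ℕ => (⟨Fs n, hFs n⟩ : ↥{t : Set (Rd d) | t ⊆ D})) ⁻¹'
        {F₀}).Infinite := Set.infinite_coe_iff.mp hF₀
    apply hinf.mono
    intro n hn
    simp only [Set.mem_preimage, Set.mem_singleton_iff] at hn
    exact congrArg Subtype.val hn
  obtain ⟨g₁, hg₁, hg₁F⟩ := Filter.extraction_of_frequently_atTop hfreq
  obtain ⟨p, -, g₂, hg₂, hg₂p⟩ := tendsto_subseq_of_bounded
    (isBounded_closedBall (x := (0:Rd d)) (r := ρ)) (fun k => hpt (g₁ k))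
  exact ⟨g₁ ∘ g₂, hg₁.comp hg₂, ⟨F₀.1, fun k => hg₁F (g₂ k)⟩, ⟨p, hg₂p⟩⟩

end extract

section dir2
variable {d : ℕ} {r : ℝ}

lemma dir2 [u : UniformSpace (XType d r)]
    (hu : uniformity (XType d r) = Filter.generate (entourages d r))
    (hr : 0 < r) (S : XType d r) (hDelone : IsDelone S.toSet)
    (hd : DiscreteTopology ↥(closure (S.toSet - S.toSet))) :
    IsCompact (closure (LIclass S)) := by
  haveI := uniformity_countably_generated hu
  obtain ⟨-, R, hR, hdense⟩ := hDelone
  apply IsSeqCompact.isCompact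
  intro Q hQ
  -- Step A: approximate each Q n by an element of LIclass S
  have hA : ∀ n : ℕ, ∃ En : XType d r, En ∈ LIclass S ∧
      (Q n, En) ∈ (entourage (closedBall (0:Rd d) (n+1)) (1/((n:ℝ)+1)) : Set _) := by
    intro n
    have hV : (entourage (closedBall (0:Rd d) (n+1)) (1/((n:ℝ)+1))
        : Set (XType d r × XType d r)) ∈ uniformity (XType d r) :=
      entourage_mem_uniformity hu (isCompact_closedBall _ _) (by positivity)
    have hball := UniformSpace.ball_mem_nhds (Q n) hV
    obtain ⟨En, hE1, hE2⟩ := mem_closure_iff_nhds.mp (hQ n) _ hball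
    exact ⟨En, hE2, hE1⟩
  choose E hELI hEent using hA
  -- window radii
  set ρm : ℕ → ℝ := fun m => R + 1 + m with hρm
  have hρmpos : ∀ m, 0 < ρm m := fun m => by
    have : (0:ℝ) ≤ m := Nat.cast_nonneg m
    simp only [hρm]; linarith
  have hρmR : ∀ m, R ≤ ρm m := fun m => by
    have : (0:ℝ) ≤ m := Nat.cast_nonneg m
    simp only [hρm]; linarith
  -- patches of E n are patches of S
  have hw : ∀ n m : ℕ, ∃ w, (E n).toSet ∩ closedBall (0:Rd d) (ρm m)
      = ((fun x => x - w) '' S.toSet) ∩ closedBall (0:Rd d) (ρm m) :=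
    fun n m => patch_of_mem_LIclass (hELI n) (hρmpos m)
  choose w hwspec using hw
  have hnonempty : ∀ n m : ℕ, ((E n).toSet ∩ closedBall (0:Rd d) (ρm m)).Nonempty := by
    intro n m
    rw [hwspec n m]
    exact patch_nonempty hdense _ (hρmR m)
  choose pt hpt using hnonempty
  set Fst : ℕ → ℕ → Set (Rd d) := fun n m =>
    (fun y => y - pt n m) '' ((E n).toSet ∩ closedBall (0:Rd d) (ρm m)) with hFstdef
  have f1 : ∀ n m, (fun y => pt n m + y) '' Fst n m
      = (E n).toSet ∩ closedBall (0:Rd d) (ρm m) := by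
    intro n m
    simp only [hFstdef]
    rw [Set.image_image]
    rw [Set.image_congr' (fun y => (by abel : pt n m + (y - pt n m) = y))]
    exact Set.image_id _
  have f2 : ∀ n m, Fst n m ⊆ closure (S.toSet - S.toSet) ∩ closedBall (0:Rd d) (2 * ρm m) := by
    intro n m
    rintro q ⟨y, hy, rfl⟩
    have hy' := hy
    have hp' := hpt n m
    rw [hwspec n m] at hy' hp'
    obtain ⟨⟨s₁, hs₁, rfl⟩, hy2⟩ := hy'
    obtain ⟨⟨s₂, hs₂, hps⟩, -⟩ := hp'
    have hps' : s₂ - w n m = pt n m := hps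
    constructor
    · apply subset_closure
      show s₁ - w n m - pt n m ∈ S.toSet - S.toSet
      rw [show s₁ - w n m - pt n m = s₁ - s₂ by rw [← hps']; abel]
      exact Set.sub_mem_sub hs₁ hs₂
    · show s₁ - w n m - pt n m ∈ closedBall (0:Rd d) (2 * ρm m)
      rw [mem_closedBall_zero_iff]
      have hy2' : ‖s₁ - w n m‖ ≤ ρm m := mem_closedBall_zero_iff.1 hy2
      calc ‖s₁ - w n m - pt n m‖ ≤ ‖s₁ - w n m‖ + ‖pt n m‖ := norm_sub_le _ _
        _ ≤ ρm m + ρm m := add_le_add hy2'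
              (mem_closedBall_zero_iff.1 (hpt n m).2)
        _ = 2 * ρm m := by ring
  have f3 : ∀ n m, pt n m ∈ closedBall (0:Rd d) (ρm m) := fun n m => (hpt n m).2
  -- diagonal extraction
  have hex : ∀ m (f : ℕ → ℕ), StrictMono f → ∃ g : ℕ → ℕ, StrictMono g ∧
      ((∃ F : Set (Rd d), ∀ k : ℕ, Fst ((f ∘ g) k) m = F) ∧
        ∃ p : Rd d, Tendsto (fun k : ℕ => pt ((f ∘ g) k) m) atTop (𝓝 p)) := by
    intro m f _
    obtain ⟨g, hg, hF, hp⟩ := level_extract _ (flc_finite hd (2 * ρm m)) (ρm m)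
      (fun n => Fst (f n) m) (fun n => f2 (f n) m) (fun n => pt (f n) m) (fun n => f3 (f n) m)
    exact ⟨g, hg, hF, hp⟩
  obtain ⟨f, hf, hdiag⟩ := diagAux_exists
    (fun (m : ℕ) (f : ℕ → ℕ) => (∃ F : Set (Rd d), ∀ k : ℕ, Fst (f k) m = F) ∧
      ∃ p : Rd d, Tendsto (fun k : ℕ => pt (f k) m) atTop (𝓝 p)) hex
  have hm : ∀ m : ℕ, ∃ (F : Set (Rd d)) (p : Rd d),
      F ⊆ closure (S.toSet - S.toSet) ∩ closedBall (0:Rd d) (2 * ρm m) ∧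
      (∀ k, m ≤ k → Fst (f k) m = F) ∧
      Tendsto (fun k => pt (f k) m) atTop (𝓝 p) := by
    intro m
    obtain ⟨f', hf', ⟨⟨F, hF⟩, ⟨p, hp⟩⟩, hlink⟩ := hdiag m
    refine ⟨F, p, ?_, ?_, ?_⟩
    · rw [← hF 0]; exact f2 _ _
    · intro k hk
      obtain ⟨j, hj, hval⟩ := hlink k hk
      rw [hval]; exact hF j
    · have hchoice : ∀ k, ∃ j, m ≤ k → (k ≤ j ∧ f k = f' j) := by
        intro k
        by_cases hk : m ≤ k
        · obtain ⟨j, hj⟩ := hlink k hk; exact ⟨j, fun _ => hj⟩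
        · exact ⟨0, fun h => absurd h hk⟩
      choose j hj using hchoice
      have hjtend : Tendsto j atTop atTop := by
        apply tendsto_atTop_mono' atTop (f₁ := id) _ tendsto_id
        filter_upwards [Filter.eventually_atTop.mpr ⟨m, fun k (hk : m ≤ k) => hk⟩] with k hk
        exact (hj k hk).1
      have htend : Tendsto (fun k => pt (f' (j k)) m) atTop (𝓝 p) := hp.comp hjtend
      apply htend.congr'
      filter_upwards [Filter.eventually_atTop.mpr ⟨m, fun k (hk : m ≤ k) => hk⟩] with k hk
      rw [(hj k hk).2]
  choose Flim plim hFsub hFconst hptend using hm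
  -- the limit configuration
  set Tset : Set (Rd d) := {x | ∃ xs : ℕ → Rd d,
    (∀ k, xs k ∈ (E (f k)).toSet) ∧ Tendsto xs atTop (𝓝 x)} with hTsetdef
  have hmin : ∀ x ∈ Tset, ∀ y ∈ Tset, x ≠ y → r ≤ dist x y := by
    rintro x ⟨xs, hxs, hxst⟩ y ⟨ys, hys, hyst⟩ hxy
    have hpos : 0 < dist x y / 2 := by
      have := dist_pos.2 hxy
      linarith
    have hx2 := Metric.tendsto_nhds.mp hxst (dist x y / 2) hpos
    have hy2 := Metric.tendsto_nhds.mp hyst (dist x y / 2) hpos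
    have hdtend : Tendsto (fun k => dist (xs k) (ys k)) atTop (𝓝 (dist x y)) :=
      hxst.dist hyst
    apply ge_of_tendsto hdtend
    filter_upwards [hx2, hy2] with k hk1 hk2
    apply (E (f k)).minDist _ (hxs k) _ (hys k)
    intro heq
    rw [heq] at hk1
    have htri := dist_triangle x (ys k) y
    rw [dist_comm x (ys k)] at htri
    linarith
  set Tx : XType d r := ⟨Tset, hmin⟩ with hTx
  -- Claim A : plim m + Flim m ⊆ Tset
  have hA2 : ∀ m : ℕ, ∀ q ∈ Flim m, plim m + q ∈ Tset := by
    intro m q hq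
    refine ⟨fun k => if m ≤ k then pt (f k) m + q else pt (f k) 0, ?_, ?_⟩
    · intro k
      by_cases hk : m ≤ k
      · simp only [if_pos hk]
        have hmem : pt (f k) m + q ∈ (fun y => pt (f k) m + y) '' Fst (f k) m :=
          ⟨q, by rw [hFconst m k hk]; exact hq, rfl⟩
        rw [f1] at hmem
        exact hmem.1
      · simp only [if_neg hk]
        exact (hpt (f k) 0).1
    · apply Tendsto.congr' _ (Filter.Tendsto.add_const q (hptend m))
      filter_upwards [Filter.eventually_atTop.mpr ⟨m, fun k (hk : m ≤ k) => hk⟩] with k hk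
      rw [if_pos hk]
  -- Claim B : points of Tset well inside the m-th window lie in plim m + Flim m
  have hB : ∀ m : ℕ, ∀ x ∈ Tset, ‖x‖ ≤ ρm m - 1 → x - plim m ∈ Flim m := by
    intro m x hx hxnorm
    obtain ⟨xs, hxs, hxst⟩ := hx
    have hev : ∀ᶠ k in atTop, xs k - pt (f k) m ∈ Flim m := by
      have h1 := Metric.tendsto_nhds.mp hxst (1/2) (by norm_num)
      filter_upwards [h1, Filter.eventually_atTop.mpr ⟨m, fun k (hk : m ≤ k) => hk⟩]
        with k hk1 hk2
      have hball : xs k ∈ closedBall (0:Rd d) (ρm m) := by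
        rw [mem_closedBall_zero_iff]
        calc ‖xs k‖ = ‖xs k - x + x‖ := by rw [sub_add_cancel]
          _ ≤ ‖xs k - x‖ + ‖x‖ := norm_add_le _ _
          _ ≤ 1/2 + (ρm m - 1) := add_le_add
                (by rw [← dist_eq_norm]; exact hk1.le) hxnorm
          _ ≤ ρm m := by linarith
      have hmem : xs k ∈ (fun y => pt (f k) m + y) '' Fst (f k) m := by
        rw [f1]; exact ⟨hxs k, hball⟩
      obtain ⟨q, hqF, hq⟩ := hmem
      rw [hFconst m k hk2] at hqF
      have hq' : pt (f k) m + q = xs k := hq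
      rw [show xs k - pt (f k) m = q by rw [← hq']; abel]
      exact hqF
    have hFfin : (Flim m).Finite :=
      ((flc_finite hd (2 * ρm m)).subset (hFsub m))
    have hfreq : ∃ q ∈ Flim m, ∃ᶠ k in atTop, xs k - pt (f k) m = q := by
      by_contra hcon
      push_neg at hcon
      have hall : ∀ᶠ k in atTop, ∀ q ∈ Flim m, xs k - pt (f k) m ≠ q := by
        rw [Filter.eventually_all_finite hFfin]
        intro q hq
        have hq2 := hcon q hq
        exact hq2
      obtain ⟨k, hk1, hk2⟩ := (hev.and hall).exists
      exact hk2 _ hk1 rfl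
    obtain ⟨q, hqF, hfq⟩ := hfreq
    obtain ⟨ψ, hψ, hψq⟩ := Filter.extraction_of_frequently_atTop hfq
    have h1 : Tendsto (fun k => xs (ψ k)) atTop (𝓝 x) := hxst.comp hψ.tendsto_atTop
    have h2 : Tendsto (fun k => pt (f (ψ k)) m + q) atTop (𝓝 (plim m + q)) :=
      Filter.Tendsto.add_const q ((hptend m).comp hψ.tendsto_atTop)
    have h3 : Tendsto (fun k => xs (ψ k)) atTop (𝓝 (plim m + q)) := by
      apply h2.congr
      intro k
      rw [← hψq k]
      abel
    have hxeq : x = plim m + q := tendsto_nhds_unique h1 h3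
    rw [hxeq, show plim m + q - plim m = q by abel]
    exact hqF
  -- Claim C : E ∘ f converges to Tx
  have hC : Tendsto (fun n => E (f n)) atTop (𝓝 Tx) := by
    rw [tendsto_iff_entourage hu]
    intro ρ hρ ε hε
    obtain ⟨m, hm2⟩ : ∃ m : ℕ, ρ + 2 ≤ ρm m := by
      obtain ⟨m, hm'⟩ := exists_nat_ge (ρ + 1 - R)
      refine ⟨m, ?_⟩
      simp only [hρm]
      linarith
    have hev := Metric.tendsto_nhds.mp (hptend m) (min ε 1) (by positivity)
    filter_upwards [hev, Filter.eventually_atTop.mpr ⟨m, fun k (hk : m ≤ k) => hk⟩]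
      with n hn1 hn2
    set v : Rd d := pt (f n) m - plim m with hv
    have hvnorm : ‖v‖ ≤ min ε 1 := by
      rw [hv, ← dist_eq_norm]
      exact hn1.le
    refine ⟨v, hvnorm.trans (min_le_left _ _), ?_⟩
    show ((fun x => v + x) '' Tset) ∩ closedBall (0:Rd d) ρ
      = (E (f n)).toSet ∩ closedBall (0:Rd d) ρ
    ext y
    constructor
    · rintro ⟨⟨t, ht, rfl⟩, hyball⟩
      have htnorm : ‖t‖ ≤ ρm m - 1 := by
        calc ‖t‖ = ‖v + t - v‖ := by rw [add_sub_cancel_left]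
          _ ≤ ‖v + t‖ + ‖v‖ := norm_sub_le _ _
          _ ≤ ρ + 1 := add_le_add (mem_closedBall_zero_iff.1 hyball)
                (hvnorm.trans (min_le_right _ _))
          _ ≤ ρm m - 1 := by linarith
      have hq := hB m t ht htnorm
      refine ⟨?_, hyball⟩
      have hvt : (fun x => v + x) t = pt (f n) m + (t - plim m) := by
        show v + t = _
        rw [hv]; abel
      rw [hvt]
      have hmem : pt (f n) m + (t - plim m) ∈ (fun y => pt (f n) m + y) '' Fst (f n) m :=
        ⟨t - plim m, by rw [hFconst m n hn2]; exact hq, rfl⟩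
      rw [f1] at hmem
      exact hmem.1
    · rintro ⟨hyE, hyball⟩
      refine ⟨?_, hyball⟩
      have hmem : y ∈ (fun y => pt (f n) m + y) '' Fst (f n) m := by
        rw [f1]
        exact ⟨hyE, closedBall_subset_closedBall (by linarith) hyball⟩
      obtain ⟨q, hqF, hq⟩ := hmem
      rw [hFconst m n hn2] at hqF
      refine ⟨plim m + q, hA2 m q hqF, ?_⟩
      rw [← hq, hv]
      abel
  -- Claim D : Q ∘ f converges to Tx
  have hD2 : Tendsto (fun n => Q (f n)) atTop (𝓝 Tx) := by
    rw [tendsto_iff_entourage hu]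
    intro ρ hρ ε hε
    have hCev := ((tendsto_iff_entourage hu).1 hC) (ρ + 1) (by linarith) (ε/2) (by positivity)
    have hev1 : ∀ᶠ n in atTop, ρ ≤ ((f n : ℕ) : ℝ) ∧ 1/(((f n : ℕ):ℝ)+1) ≤ min (ε/2) 1 := by
      obtain ⟨n₀, hn₀⟩ := exists_nat_ge ρ
      obtain ⟨m₀, hm₀⟩ := exists_nat_one_div_lt (show (0:ℝ) < min (ε/2) 1 by positivity)
      filter_upwards [Filter.eventually_atTop.mpr ⟨max n₀ m₀, fun k (hk : max n₀ m₀ ≤ k) => hk⟩]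
        with n hn
      have hfn : max n₀ m₀ ≤ f n := hn.trans hf.le_apply
      constructor
      · refine hn₀.trans ?_
        exact_mod_cast (le_max_left n₀ m₀).trans hfn
      · refine (one_div_nat_mono ((le_max_right n₀ m₀).trans hfn)).trans hm₀.le
    filter_upwards [hCev, hev1] with n hn1 hn2
    have hε₂pos : (0:ℝ) < 1/(((f n : ℕ):ℝ)+1) := by positivity
    have hsym : (E (f n), Q (f n)) ∈
        (entourage (closedBall (0:Rd d) ρ) (1/(((f n : ℕ):ℝ)+1)) : Set _) := by
      apply entourage_symm
      apply entourage_mono _ le_rfl (hEent (f n))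
      apply closedBall_subset_closedBall
      have h1 : 1/(((f n : ℕ):ℝ)+1) ≤ 1 := hn2.2.trans (min_le_right _ _)
      linarith [hn2.1]
    have hfirst : (Tx, E (f n)) ∈
        (entourage (closedBall (0:Rd d) (ρ + 1/(((f n : ℕ):ℝ)+1))) (ε/2) : Set _) := by
      apply entourage_mono _ le_rfl hn1
      apply closedBall_subset_closedBall
      have h1 : 1/(((f n : ℕ):ℝ)+1) ≤ 1 := hn2.2.trans (min_le_right _ _)
      linarith
    have hcomp := entourage_comp hfirst hsym
    apply entourage_mono (le_refl _) _ hcomp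
    have h2 : 1/(((f n : ℕ):ℝ)+1) ≤ ε/2 := hn2.2.trans (min_le_left _ _)
    linarith
  have hTmem : Tx ∈ closure (LIclass S) :=
    isClosed_closure.mem_of_tendsto hD2 (Filter.Eventually.of_forall fun n => hQ (f n))
  exact ⟨Tx, hTmem, f, hf, hD2⟩

end dir2


/-- for a Delone set `S ∈ X(r)`, the closure of `LI(S)` in `X(r)` is
compact iff `S` has finite local complexity (the closure of `S - S` is discrete). -/
theorem closure_LIclass_isCompact_iff_flc
    {d : ℕ} {r : ℝ} (hr : 0 < r)
    [u : UniformSpace (XType d r)]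
    (hu : uniformity (XType d r) = Filter.generate (entourages d r))
    (S : XType d r) (hDelone : IsDelone S.toSet) :
    IsCompact (closure (LIclass S))
      ↔ DiscreteTopology ↥(closure (S.toSet - S.toSet)) := by
  constructor
  · exact fun hc => dir1 hu hr S hc
  · exact fun hd => dir2 hu hr S hDelone hd
end
end

section
/- Let S ∈ X(r) be a Delone set in ℝ^d of finite local complexity. The following are equivalent: (i) S is repetitive; (ii) LI(S) equals the closure of the translation orbit [S] = {t + S : t ∈ ℝ^d} in X(r); (iii) the translation action of ℝ^d on the closure of [S] is minimal, i.e. for every S' in the closure of [S], the orbit {t + S' : t ∈ ℝ^d} is dense in the closure of [S]. -/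
open scoped Pointwise
open Metric MeasureTheory Filter Topology

noncomputable section

/-- A set `S ⊆ ℝ^d` is repetitive. -/
def Repetitive {d : ℕ} (S : Set (Rd d)) : Prop :=
  ∀ ρ > (0:ℝ), ∃ R > (0:ℝ), ∀ v w : Rd d, ∃ t : Rd d, ‖t - w‖ ≤ R ∧
    ((fun x => x - t) '' S) ∩ closedBall (0 : Rd d) ρ
      = ((fun x => x - v) '' S) ∩ closedBall (0 : Rd d) ρ

namespace RepAux
variable {d : ℕ} {r : ℝ}

lemma mem_subImage {A : Set (Rd d)} {t y : Rd d} :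
    y ∈ (fun x => x - t) '' A ↔ y + t ∈ A := by
  constructor
  · rintro ⟨x, hx, rfl⟩
    have h : x - t + t = x := by abel
    rwa [h]
  · intro h
    exact ⟨y + t, h, by show y + t - t = y; abel⟩

lemma mem_addImage {A : Set (Rd d)} {t y : Rd d} :
    y ∈ (fun x => t + x) '' A ↔ y - t ∈ A := by
  constructor
  · rintro ⟨x, hx, rfl⟩
    have h : t + x - t = x := by abel
    rwa [h]
  · intro h
    exact ⟨y - t, h, by show t + (y - t) = y; abel⟩

/-- Elementwise patch-equality predicate. -/
def PEq (A B : Set (Rd d)) (ρ : ℝ) (v w : Rd d) : Prop :=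
  ∀ x : Rd d, ‖x‖ ≤ ρ → (x + v ∈ A ↔ x + w ∈ B)

lemma patch_eq_iff {A B : Set (Rd d)} {ρ : ℝ} {v w : Rd d} :
    ((fun x => x - v) '' A) ∩ closedBall (0 : Rd d) ρ
      = ((fun x => x - w) '' B) ∩ closedBall (0 : Rd d) ρ ↔ PEq A B ρ v w := by
  simp only [Set.ext_iff, Set.mem_inter_iff, mem_subImage, mem_closedBall_zero_iff, PEq]
  constructor
  · intro h x hx
    have := h x
    tauto
  · intro h x
    have := h x
    tauto

lemma PEq.trans' {A B C : Set (Rd d)} {ρ : ℝ} {v w u : Rd d}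
    (h1 : PEq A B ρ v w) (h2 : PEq B C ρ w u) : PEq A C ρ v u :=
  fun x hx => (h1 x hx).trans (h2 x hx)

/-- "Every patch of `A` occurs in `B`". -/
def PembP (A B : Set (Rd d)) : Prop :=
  ∀ ρ > (0:ℝ), ∀ v : Rd d, ∃ w : Rd d, PEq A B ρ v w

lemma PembP_refl (A : Set (Rd d)) : PembP A A :=
  fun _ _ v => ⟨v, fun _ _ => Iff.rfl⟩

lemma PembP_trans {A B C : Set (Rd d)} (h1 : PembP A B) (h2 : PembP B C) : PembP A C := by
  intro ρ hρ v
  obtain ⟨w, hw⟩ := h1 ρ hρ v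
  obtain ⟨u, hu⟩ := h2 ρ hρ w
  exact ⟨u, hw.trans' hu⟩

def XType.translate (S : XType d r) (t : Rd d) : XType d r :=
  ⟨(fun x => t + x) '' S.toSet, by
    rintro x ⟨a, ha, rfl⟩ y ⟨b, hb, rfl⟩ hxy
    have hab : a ≠ b := by rintro rfl; exact hxy rfl
    calc r ≤ dist a b := S.minDist a ha b hb hab
      _ = dist (t + a) (t + b) := (dist_add_left t a b).symm⟩

lemma translate_mem_orbit (S : XType d r) (t : Rd d) : XType.translate S t ∈ orbitXT S :=
  ⟨t, rfl⟩

lemma entourage_mono {K K' : Set (Rd d)} {ε ε' : ℝ} (hK : K ⊆ K') (hε : ε' ≤ ε) :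
    entourage (r := r) K' ε' ⊆ entourage K ε := by
  rintro ⟨S, T⟩ ⟨v, hv, h⟩
  refine ⟨v, hv.trans hε, ?_⟩
  have h2 := congrArg (· ∩ K) h
  simpa [Set.inter_assoc, Set.inter_eq_self_of_subset_right hK] using h2

lemma exists_entourage_subset {t : Set (Set (XType d r × XType d r))}
    (hfin : t.Finite) (ht : t ⊆ entourages d r) :
    ∃ K ε, IsCompact K ∧ 0 < ε ∧ entourage K ε ⊆ ⋂₀ t := by
  revert ht
  refine Set.Finite.induction_on t hfin ?_ ?_
  · exact fun _ => ⟨∅, 1, isCompact_empty, one_pos, by simp⟩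
  · rintro a s - - ih ht
    obtain ⟨K₁, ε₁, hK₁, hε₁, rfl⟩ := ht (Set.mem_insert a s)
    obtain ⟨K₂, ε₂, hK₂, hε₂, hsub₂⟩ := ih (fun E hE => ht (Set.mem_insert_of_mem _ hE))
    refine ⟨K₁ ∪ K₂, min ε₁ ε₂, hK₁.union hK₂, lt_min hε₁ hε₂, ?_⟩
    rw [Set.sInter_insert]
    exact Set.subset_inter
      (entourage_mono Set.subset_union_left (min_le_left _ _))
      ((entourage_mono Set.subset_union_right (min_le_right _ _)).trans hsub₂)

lemma mem_closure_orbit_iff [u : UniformSpace (XType d r)]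
    (hu : uniformity (XType d r) = Filter.generate (entourages d r))
    (S S' : XType d r) :
    S' ∈ closure (orbitXT S) ↔ PembP S'.toSet S.toSet := by
  constructor
  · intro hcl ρ hρ v
    have hK : IsCompact (closedBall v (ρ + 1)) := isCompact_closedBall _ _
    have hV : entourage (r := r) (closedBall v (ρ + 1)) 1 ∈ uniformity (XType d r) := by
      rw [hu]; exact Filter.mem_generate_of_mem ⟨_, _, hK, one_pos, rfl⟩
    have hnhds : Prod.mk S' ⁻¹' entourage (closedBall v (ρ + 1)) 1 ∈ 𝓝 S' := by
      rw [nhds_eq_comap_uniformity]; exact Filter.preimage_mem_comap hV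
    obtain ⟨T, hT1, hT2⟩ := mem_closure_iff_nhds.mp hcl _ hnhds
    obtain ⟨vv, hvv, heq⟩ := hT1
    obtain ⟨t, ht⟩ := hT2
    refine ⟨v + vv - t, ?_⟩
    intro x hx
    have hxK : x + v + vv ∈ closedBall v (ρ + 1) := by
      rw [mem_closedBall, dist_eq_norm]
      have h : x + v + vv - v = x + vv := by abel
      rw [h]
      calc ‖x + vv‖ ≤ ‖x‖ + ‖vv‖ := norm_add_le _ _
        _ ≤ ρ + 1 := add_le_add hx hvv
    have h1 : x + v ∈ S'.toSet ↔ x + v + vv ∈ (fun y => vv + y) '' S'.toSet := by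
      rw [mem_addImage]
      have h : x + v + vv - vv = x + v := by abel
      rw [h]
    have h2 : x + v + vv ∈ (fun y => vv + y) '' S'.toSet ↔ x + v + vv ∈ T.toSet := by
      have := Set.ext_iff.mp heq (x + v + vv)
      simp only [Set.mem_inter_iff] at this
      tauto
    have h3 : x + v + vv ∈ T.toSet ↔ x + (v + vv - t) ∈ S.toSet := by
      rw [ht, mem_addImage]
      have h : x + v + vv - t = x + (v + vv - t) := by abel
      rw [h]
    rw [h1, h2, h3]
  · intro hP
    rw [mem_closure_iff_nhds]
    intro N hN
    rw [nhds_eq_comap_uniformity, hu] at hN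
    obtain ⟨V, hV, hVsub⟩ := Filter.mem_comap.mp hN
    rw [Filter.mem_generate_iff] at hV
    obtain ⟨t, hts, htfin, htsub⟩ := hV
    obtain ⟨K, ε, hK, hε, hKsub⟩ := exists_entourage_subset htfin hts
    obtain ⟨ρ₀, hρ₀⟩ := hK.isBounded.subset_closedBall 0
    have hρpos : (0:ℝ) < max ρ₀ 1 := lt_of_lt_of_le one_pos (le_max_right _ _)
    have hKρ : K ⊆ closedBall 0 (max ρ₀ 1) :=
      hρ₀.trans (closedBall_subset_closedBall (le_max_left _ _))
    obtain ⟨w, hw⟩ := hP (max ρ₀ 1) hρpos 0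
    refine ⟨XType.translate S (-w), hVsub ?_, translate_mem_orbit S (-w)⟩
    apply htsub
    apply hKsub
    refine ⟨0, by simpa using hε.le, ?_⟩
    ext x
    simp only [Set.mem_inter_iff, zero_add, Set.image_id']
    constructor
    · rintro ⟨hx1, hx2⟩
      have := (hw x (mem_closedBall_zero_iff.mp (hKρ hx2))).mp (by simpa using hx1)
      refine ⟨?_, hx2⟩
      show x ∈ (fun y => -w + y) '' S.toSet
      rw [mem_addImage]
      have h : x - -w = x + w := by abel
      rwa [h]
    · rintro ⟨hx1, hx2⟩
      have hx1' : x + w ∈ S.toSet := by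
        have := mem_addImage.mp (hx1 : x ∈ (fun y => -w + y) '' S.toSet)
        have h : x - -w = x + w := by abel
        rwa [h] at this
      have := (hw x (mem_closedBall_zero_iff.mp (hKρ hx2))).mpr hx1'
      exact ⟨by simpa using this, hx2⟩


lemma patch_finite {S : Set (Rd d)} (hflc : DiscreteTopology ↥(closure (S - S))) (ρ : ℝ) :
    (closure (S - S) ∩ closedBall (0 : Rd d) ρ).Finite := by
  have hcompact : IsCompact (closure (S - S) ∩ closedBall (0 : Rd d) ρ) :=
    (isCompact_closedBall _ _).inter_left isClosed_closure
  exact hcompact.finite (isDiscrete_iff_discreteTopology.mpr (DiscreteTopology.of_subset hflc Set.inter_subset_left))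

lemma patch_subset {S : Set (Rd d)} {s : Rd d} (hs : s ∈ S) (ρ : ℝ) :
    ((fun x => x - s) '' S) ∩ closedBall (0 : Rd d) ρ
      ⊆ closure (S - S) ∩ closedBall (0 : Rd d) ρ := by
  rintro x ⟨hx1, hx2⟩
  refine ⟨subset_closure ?_, hx2⟩
  exact ⟨x + s, mem_subImage.mp hx1, s, hs, by show x + s - s = x; abel⟩

lemma ultra_const {α β : Type*} (U : Ultrafilter α) (g : α → β)
    (h : (Set.range g).Finite) : ∃ b, {a | g a = b} ∈ U := by
  by_contra hc
  push_neg at hc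
  have h1 : ∀ b, {a | g a ≠ b} ∈ U := fun b => Ultrafilter.compl_mem_iff_notMem.mpr (hc b)
  have h2 : (⋂ b ∈ h.toFinset, {a | g a ≠ b}) ∈ U :=
    (Filter.biInter_finset_mem h.toFinset).mpr (fun b _ => h1 b)
  obtain ⟨a, ha⟩ := Ultrafilter.nonempty_of_mem h2
  exact Set.mem_iInter₂.mp ha (g a) (h.mem_toFinset.mpr (Set.mem_range_self a)) rfl

lemma repetitive_iff' {S : Set (Rd d)} : Repetitive S ↔
    ∀ ρ > (0:ℝ), ∃ R > (0:ℝ), ∀ v w : Rd d, ∃ t : Rd d, ‖t - w‖ ≤ R ∧ PEq S S ρ t v := by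
  unfold Repetitive
  simp only [patch_eq_iff]

lemma locIso_iff {A B : Set (Rd d)} : LocIso A B ↔ PembP A B ∧ PembP B A := by
  unfold LocIso PembP
  simp only [patch_eq_iff]

/-- Reduction of repetitivity to relative density of occurrences of point-centered
patches, using finite local complexity. -/
lemma rep_of_centered {S : XType d r} (hDel : RelativelyDense S.toSet)
    (hflc : DiscreteTopology ↥(closure (S.toSet - S.toSet)))
    (h : ∀ ρ > (0:ℝ), ∀ s ∈ S.toSet, ∃ R > (0:ℝ), ∀ w : Rd d,
      ∃ t : Rd d, ‖t - w‖ ≤ R ∧ PEq S.toSet S.toSet ρ t s) :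
    Repetitive S.toSet := by
  classical
  rw [repetitive_iff']
  intro ρ hρ
  obtain ⟨R₀, hR₀pos, hR₀⟩ := hDel
  have hρ'pos : (0:ℝ) < ρ + R₀ := by positivity
  set ρ' : ℝ := ρ + R₀ with hρ'def
  set patch : Rd d → Set (Rd d) :=
    fun s => ((fun x => x - s) '' S.toSet) ∩ closedBall (0 : Rd d) ρ' with hpatchdef
  have h𝒫fin : (patch '' S.toSet).Finite := by
    apply Set.Finite.subset (patch_finite hflc ρ').finite_subsets
    rintro _ ⟨s, hs, rfl⟩
    exact patch_subset hs ρ'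
  set cond : Set (Rd d) → ℝ → Prop :=
    fun Q R => ∀ w : Rd d, ∃ t : Rd d, ‖t - w‖ ≤ R ∧ patch t = Q with hconddef
  have hQ : ∀ Q ∈ patch '' S.toSet, ∃ R, 0 < R ∧ cond Q R := by
    rintro Q ⟨s, hs, rfl⟩
    obtain ⟨R, hRpos, hR⟩ := h ρ' hρ'pos s hs
    refine ⟨R, hRpos, fun w => ?_⟩
    obtain ⟨t, h1, h2⟩ := hR w
    exact ⟨t, h1, patch_eq_iff.mpr h2⟩
  set f : Set (Rd d) → ℝ := fun Q => if hh : ∃ R, 0 < R ∧ cond Q R then hh.choose else 1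
    with hfdef
  have hf : ∀ Q ∈ patch '' S.toSet, 0 < f Q ∧ cond Q (f Q) := by
    intro Q hQ'
    have hh := hQ Q hQ'
    simp only [hfdef, dif_pos hh]
    exact hh.choose_spec
  obtain ⟨R₁, hR₁⟩ := (h𝒫fin.image f).bddAbove
  refine ⟨max R₁ 1, lt_of_lt_of_le one_pos (le_max_right _ _), ?_⟩
  intro v w
  obtain ⟨s, hsS, hsd⟩ := hR₀ v
  have hpatch_mem : patch s ∈ patch '' S.toSet := Set.mem_image_of_mem _ hsS
  obtain ⟨hfpos, hcond⟩ := hf _ hpatch_mem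
  obtain ⟨t', ht'1, ht'2⟩ := hcond (w + s - v)
  refine ⟨t' - s + v, ?_, ?_⟩
  · have e : t' - s + v - w = t' - (w + s - v) := by abel
    rw [e]
    exact ht'1.trans ((hR₁ (Set.mem_image_of_mem f hpatch_mem)).trans (le_max_left _ _))
  · have hPE : PEq S.toSet S.toSet ρ' t' s := patch_eq_iff.mp ht'2
    intro x hx
    have hz : ‖x + v - s‖ ≤ ρ' := by
      have e : x + v - s = x + (v - s) := by abel
      rw [e]
      calc ‖x + (v - s)‖ ≤ ‖x‖ + ‖v - s‖ := norm_add_le _ _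
        _ ≤ ρ + R₀ := add_le_add hx (by rw [← dist_eq_norm]; exact hsd)
    have hiff := hPE (x + v - s) hz
    have e1 : x + v - s + t' = x + (t' - s + v) := by abel
    have e2 : x + v - s + s = x + v := by abel
    rw [e1, e2] at hiff
    exact hiff

lemma rep_imp_H {S : XType d r} (hrep : Repetitive S.toSet) (B : Set (Rd d))
    (hB : PembP B S.toSet) : PembP S.toSet B := by
  rw [repetitive_iff'] at hrep
  intro ρ hρ v
  obtain ⟨R, hRpos, hR⟩ := hrep ρ hρ
  obtain ⟨u, hu⟩ := hB (ρ + R) (by positivity) 0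
  obtain ⟨t, ht1, ht2⟩ := hR v u
  refine ⟨t - u, ?_⟩
  intro x hx
  have hz : ‖x + (t - u)‖ ≤ ρ + R :=
    (norm_add_le _ _).trans (add_le_add hx ht1)
  have h1 := hu (x + (t - u)) hz
  have e1 : x + (t - u) + u = x + t := by abel
  have e2 : x + (t - u) + 0 = x + (t - u) := by abel
  rw [e1, e2] at h1
  exact ((ht2 x hx).symm).trans h1.symm

lemma minimal_imp_rep {S : XType d r} (hDel : RelativelyDense S.toSet)
    (hflc : DiscreteTopology ↥(closure (S.toSet - S.toSet)))
    (hH : ∀ S' : XType d r, PembP S'.toSet S.toSet → PembP S.toSet S'.toSet) :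
    Repetitive S.toSet := by
  classical
  obtain ⟨R₀, hR₀pos, hR₀⟩ := hDel
  apply rep_of_centered ⟨R₀, hR₀pos, hR₀⟩ hflc
  by_contra hbad
  push_neg at hbad
  obtain ⟨ρ, hρ, s₀, hs₀, hbad⟩ := hbad
  -- hbad : ∀ R > 0, ∃ w, ∀ t, ‖t - w‖ ≤ R → ¬ PEq S S ρ t s₀
  choose wfun hwfun using fun n : ℕ => hbad (R₀ + n + 1) (by positivity)
  choose sfun hsS hsdist using fun n : ℕ => hR₀ (wfun n)
  have key : ∀ n : ℕ, ∀ u : Rd d, ‖u‖ ≤ (n:ℝ) + 1 →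
      ¬ PEq S.toSet S.toSet ρ (sfun n + u) s₀ := by
    intro n u hu
    apply hwfun n
    have e : sfun n + u - wfun n = (sfun n - wfun n) + u := by abel
    rw [e]
    calc ‖(sfun n - wfun n) + u‖ ≤ ‖sfun n - wfun n‖ + ‖u‖ := norm_add_le _ _
      _ ≤ R₀ + ((n:ℝ) + 1) := by
          refine add_le_add ?_ hu
          rw [← dist_eq_norm, dist_comm]
          exact hsdist n
      _ = R₀ + n + 1 := by ring
  set U : Ultrafilter ℕ := hyperfilter ℕ with hUdef
  set g : ℕ → ℕ → Set (Rd d) :=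
    fun m n => ((fun x => x - sfun n) '' S.toSet) ∩ closedBall (0 : Rd d) (m : ℝ)
    with hgdef
  have hgfin : ∀ m : ℕ, (Set.range (g m)).Finite := by
    intro m
    apply Set.Finite.subset (patch_finite hflc (m : ℝ)).finite_subsets
    rintro _ ⟨n, rfl⟩
    exact patch_subset (hsS n) (m : ℝ)
  have hA : ∀ m : ℕ, ∃ A, {n | g m n = A} ∈ U := fun m => ultra_const U _ (hgfin m)
  choose A hAU using hA
  have hAinf : ∀ m : ℕ, {n | g m n = A m}.Infinite := by
    intro m
    by_contra hfin
    rw [Set.not_infinite] at hfin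
    exact (Set.finite_coe_iff.mp hfin).notMem_hyperfilter (hAU m)
  have hcons : ∀ m m' : ℕ, m ≤ m' → A m' ∩ closedBall (0 : Rd d) (m : ℝ) = A m := by
    intro m m' hmm
    obtain ⟨n, hn⟩ := Ultrafilter.nonempty_of_mem (Filter.inter_mem (hAU m) (hAU m'))
    rw [← hn.1, ← hn.2]
    show (((fun x => x - sfun n) '' S.toSet) ∩ closedBall 0 (m' : ℝ)) ∩ closedBall 0 (m : ℝ)
      = ((fun x => x - sfun n) '' S.toSet) ∩ closedBall 0 (m : ℝ)
    rw [Set.inter_assoc,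
      Set.inter_eq_self_of_subset_right (closedBall_subset_closedBall (by exact_mod_cast hmm))]
  have hAsub : ∀ m : ℕ, A m ⊆ closedBall (0 : Rd d) (m : ℝ) := by
    intro m
    obtain ⟨n, hn⟩ := Ultrafilter.nonempty_of_mem (hAU m)
    rw [← hn]
    exact Set.inter_subset_right
  have hAmono : ∀ m m' : ℕ, m ≤ m' → A m ⊆ A m' := by
    intro m m' hmm
    rw [← hcons m m' hmm]
    exact Set.inter_subset_left
  set S' : Set (Rd d) := ⋃ m, A m with hS'def
  have hS'cap : ∀ m : ℕ, S' ∩ closedBall (0 : Rd d) (m : ℝ) = A m := by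
    intro m
    apply Set.Subset.antisymm
    · rintro x ⟨hx1, hx2⟩
      obtain ⟨k, hk⟩ := Set.mem_iUnion.mp hx1
      rcases le_total k m with hkm | hkm
      · exact hAmono k m hkm hk
      · rw [← hcons m k hkm]; exact ⟨hk, hx2⟩
    · intro x hx
      exact ⟨Set.mem_iUnion.mpr ⟨m, hx⟩, hAsub m hx⟩
  have hS'min : ∀ x ∈ S', ∀ y ∈ S', x ≠ y → r ≤ dist x y := by
    intro x hx y hy hxy
    obtain ⟨mx, hmx⟩ := Set.mem_iUnion.mp hx
    obtain ⟨my, hmy⟩ := Set.mem_iUnion.mp hy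
    have hxm : x ∈ A (max mx my) := hAmono mx _ (le_max_left _ _) hmx
    have hym : y ∈ A (max mx my) := hAmono my _ (le_max_right _ _) hmy
    obtain ⟨n, hn⟩ := Ultrafilter.nonempty_of_mem (hAU (max mx my))
    rw [← hn] at hxm hym
    have hx' : x + sfun n ∈ S.toSet := mem_subImage.mp hxm.1
    have hy' : y + sfun n ∈ S.toSet := mem_subImage.mp hym.1
    have hne : x + sfun n ≠ y + sfun n := fun h => hxy (add_right_cancel h)
    calc r ≤ dist (x + sfun n) (y + sfun n) := S.minDist _ hx' _ hy' hne
      _ = dist x y := dist_add_right _ _ _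
  have hPemb : PembP S' S.toSet := by
    intro ρ₁ hρ₁ v
    obtain ⟨m, hm⟩ := exists_nat_ge (‖v‖ + ρ₁)
    obtain ⟨n, hn⟩ := Ultrafilter.nonempty_of_mem (hAU m)
    refine ⟨v + sfun n, ?_⟩
    intro x hx
    have hball : x + v ∈ closedBall (0 : Rd d) (m : ℝ) := by
      rw [mem_closedBall_zero_iff]
      calc ‖x + v‖ ≤ ‖x‖ + ‖v‖ := norm_add_le _ _
        _ ≤ ρ₁ + ‖v‖ := by linarith
        _ ≤ (m : ℝ) := by linarith
    have h1 : x + v ∈ S' ↔ x + v ∈ A m := by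
      rw [← hS'cap m]
      exact ⟨fun h => ⟨h, hball⟩, fun h => h.1⟩
    rw [h1, ← hn]
    show x + v ∈ ((fun x => x - sfun n) '' S.toSet) ∩ closedBall 0 (m : ℝ)
      ↔ x + (v + sfun n) ∈ S.toSet
    constructor
    · rintro ⟨h2, -⟩
      have := mem_subImage.mp h2
      have e : x + v + sfun n = x + (v + sfun n) := by abel
      rwa [e] at this
    · intro h2
      refine ⟨mem_subImage.mpr ?_, hball⟩
      have e : x + v + sfun n = x + (v + sfun n) := by abel
      rwa [e]
  have hP2 := hH ⟨S', hS'min⟩ hPemb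
  obtain ⟨w₀, hw₀⟩ := hP2 ρ hρ s₀
  obtain ⟨m, hm⟩ := exists_nat_ge (‖w₀‖ + ρ)
  obtain ⟨N, hN⟩ := exists_nat_ge ‖w₀‖
  obtain ⟨n, hnmem, hnlt⟩ := (hAinf m).exists_gt N
  have hnge : ‖w₀‖ ≤ (n:ℝ) + 1 := by
    have : (N:ℝ) ≤ (n:ℝ) := by exact_mod_cast hnlt.le
    linarith
  apply key n w₀ hnge
  intro x hx
  have hball : x + w₀ ∈ closedBall (0 : Rd d) (m : ℝ) := by
    rw [mem_closedBall_zero_iff]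
    calc ‖x + w₀‖ ≤ ‖x‖ + ‖w₀‖ := norm_add_le _ _
      _ ≤ ρ + ‖w₀‖ := by linarith
      _ ≤ (m : ℝ) := by linarith
  have h1 : x + w₀ ∈ S' ↔ x + (sfun n + w₀) ∈ S.toSet := by
    have hmem : x + w₀ ∈ S' ↔ x + w₀ ∈ A m := by
      rw [← hS'cap m]
      exact ⟨fun h => ⟨h, hball⟩, fun h => h.1⟩
    rw [hmem, ← hnmem]
    show x + w₀ ∈ ((fun x => x - sfun n) '' S.toSet) ∩ closedBall 0 (m : ℝ)
      ↔ x + (sfun n + w₀) ∈ S.toSet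
    constructor
    · rintro ⟨h2, -⟩
      have := mem_subImage.mp h2
      have e : x + w₀ + sfun n = x + (sfun n + w₀) := by abel
      rwa [e] at this
    · intro h2
      refine ⟨mem_subImage.mpr ?_, hball⟩
      have e : x + w₀ + sfun n = x + (sfun n + w₀) := by abel
      rwa [e]
  have h2 := hw₀ x hx
  rw [← h1]
  exact h2.symm

end RepAux

/-- for a Delone set `S ∈ X(r)` of finite local complexity, the following
are equivalent: (i) `S` is repetitive; (ii) `LI(S)` equals the closure of the
translation orbit of `S`; (iii) the translation action on the closure of the orbit of
`S` is minimal. -/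
theorem repetitive_tfae
    {d : ℕ} {r : ℝ} (hr : 0 < r)
    [u : UniformSpace (XType d r)]
    (hu : uniformity (XType d r) = Filter.generate (entourages d r))
    (S : XType d r) (hDelone : IsDelone S.toSet)
    (hflc : DiscreteTopology ↥(closure (S.toSet - S.toSet))) :
    (Repetitive S.toSet ↔ LIclass S = closure (orbitXT S)) ∧
    (Repetitive S.toSet ↔
      ∀ S' ∈ closure (orbitXT S), closure (orbitXT S) ⊆ closure (orbitXT S')) := by
  have hL : ∀ T T' : XType d r, T' ∈ closure (orbitXT T) ↔ RepAux.PembP T'.toSet T.toSet :=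
    fun T T' => RepAux.mem_closure_orbit_iff hu T T'
  have hRH : Repetitive S.toSet ↔
      (∀ S' : XType d r, RepAux.PembP S'.toSet S.toSet → RepAux.PembP S.toSet S'.toSet) := by
    constructor
    · intro h S' h'
      exact RepAux.rep_imp_H h S'.toSet h'
    · intro h
      exact RepAux.minimal_imp_rep hDelone.2 hflc h
  constructor
  · rw [hRH]
    constructor
    · intro h
      ext S'
      rw [hL S S']
      show LocIso S.toSet S'.toSet ↔ RepAux.PembP S'.toSet S.toSet
      rw [RepAux.locIso_iff]
      exact ⟨fun h' => h'.2, fun h' => ⟨h S' h', h'⟩⟩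
    · intro heq S' hS'
      have h1 : S' ∈ closure (orbitXT S) := (hL S S').mpr hS'
      rw [← heq] at h1
      exact ((RepAux.locIso_iff).mp h1).1
  · rw [hRH]
    constructor
    · intro h S' hS' S'' hS''
      rw [hL S S'] at hS'
      rw [hL S S''] at hS''
      rw [hL S' S'']
      exact RepAux.PembP_trans hS'' (h S' hS')
    · intro h S' hS'
      have h1 : S' ∈ closure (orbitXT S) := (hL S S').mpr hS'
      have h2 : S ∈ closure (orbitXT S) := (hL S S).mpr (RepAux.PembP_refl _)
      have h3 := h S' h1 h2
      exact (hL S' S).mp h3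
end
end

section
/- Fix sequences α, β : ℕ → {−1, 1}. In ℤ₂ × ℤ₂ (where ℤ₂ is the ring of 2-adic integers), set c₁ = (0, 0) and, for k ≥ 2, c_k = (∑_{n=0}^{k−2} α_n 2^n, ∑_{n=0}^{k−2} β_n 2^n), and let c = (∑_{n=0}^∞ α_n 2^n, ∑_{n=0}^∞ β_n 2^n). Let W = ⋃_{k≥1} (c_k + 2^k (ℤ₂ × ℤ₂)). Then W is open, c ∉ W, the closure of W equals W ∪ {c}, and the boundary of W is exactly {c}; in particular ∂W has Haar measure zero. -/
open Metric MeasureTheory Filter Topology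

noncomputable section

/-- The 2-adic integers. -/
abbrev Z2 : Type := PadicInt 2

/-- The group `ℤ₂ × ℤ₂`. -/
abbrev Z2sq : Type := Z2 × Z2

lemma norm_two_Z2 : ‖(2:Z2)‖ = 1/2 := by
  have := @PadicInt.norm_p 2 _
  simpa using this

lemma summable_aux (γ : ℕ → ℤ) : Summable (fun n => (γ n : Z2) * 2 ^ n) := by
  apply Summable.of_norm_bounded (g := fun n => (1/2 : ℝ)^n)
    (summable_geometric_of_lt_one (by norm_num) (by norm_num))
  intro n
  rw [norm_mul, norm_pow, norm_two_Z2]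
  calc ‖(γ n : Z2)‖ * (1/2:ℝ)^n ≤ 1 * (1/2:ℝ)^n := by
        gcongr; exact PadicInt.norm_le_one _
    _ = (1/2:ℝ)^n := one_mul _

lemma norm_pm_one {a : ℤ} (ha : a = 1 ∨ a = -1) : ‖(a : Z2)‖ = 1 := by
  rcases ha with h | h <;> simp [h]

lemma tail_norm (γ : ℕ → ℤ) (hγ : ∀ n, γ n = 1 ∨ γ n = -1) (m : ℕ) :
    ‖(∑' n : ℕ, (γ n : Z2) * 2 ^ n) - ∑ n ∈ Finset.range m, (γ n : Z2) * 2 ^ n‖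
      = (1/2:ℝ)^m := by
  have hs := summable_aux γ
  have h1 : (∑' n : ℕ, (γ n : Z2) * 2 ^ n) - ∑ n ∈ Finset.range m, (γ n : Z2) * 2 ^ n
      = ∑' n : ℕ, (γ (n + m) : Z2) * 2 ^ (n + m) := by
    rw [eq_comm, eq_sub_iff_add_eq']
    exact Summable.sum_add_tsum_nat_add m hs
  have h2 : ∀ n : ℕ, (γ (n + m) : Z2) * 2 ^ (n + m) = 2 ^ m * ((γ (n + m) : Z2) * 2 ^ n) := by
    intro n; rw [pow_add]; ring
  have hs2 : Summable (fun n => (γ (n + m) : Z2) * 2 ^ n) := summable_aux (fun n => γ (n + m))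
  have h3 : (∑' n : ℕ, (γ (n + m) : Z2) * 2 ^ (n + m))
      = 2 ^ m * ∑' n : ℕ, (γ (n + m) : Z2) * 2 ^ n := by
    simp_rw [h2]; exact (hs2.hasSum.mul_left _).tsum_eq
  set u : Z2 := ∑' n : ℕ, (γ (n + m) : Z2) * 2 ^ n with hu
  have h4 : u = (γ m : Z2) + 2 * ∑' n : ℕ, (γ (n + 1 + m) : Z2) * 2 ^ n := by
    rw [hu, Summable.tsum_eq_zero_add hs2]
    congr 1
    · simp
    · rw [← ((summable_aux (fun n => γ (n + 1 + m))).hasSum.mul_left (2:Z2)).tsum_eq]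
      congr 1 with n
      rw [pow_succ]

      ring
  have hnu : ‖u‖ = 1 := by
    rw [h4]
    have hb : ‖2 * ∑' n : ℕ, (γ (n + 1 + m) : Z2) * 2 ^ n‖ ≤ 1/2 := by
      rw [norm_mul, norm_two_Z2]
      calc (1/2:ℝ) * ‖∑' n : ℕ, (γ (n + 1 + m) : Z2) * 2 ^ n‖ ≤ (1/2) * 1 := by
            gcongr; exact PadicInt.norm_le_one _
        _ = 1/2 := by norm_num
    have hne : ‖(γ m : Z2)‖ ≠ ‖2 * ∑' n : ℕ, (γ (n + 1 + m) : Z2) * 2 ^ n‖ := by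
      rw [norm_pm_one (hγ m)]; intro h; rw [← h] at hb; norm_num at hb
    rw [PadicInt.norm_add_eq_max_of_ne hne, norm_pm_one (hγ m)]
    have : (0:ℝ) ≤ ‖2 * ∑' n : ℕ, (γ (n + 1 + m) : Z2) * 2 ^ n‖ := norm_nonneg _
    rw [max_eq_left (hb.trans (by norm_num))]
  rw [h1, h3, norm_mul, norm_pow, norm_two_Z2, hnu, mul_one]

lemma exists_iff_norm_le (a z : Z2) (k : ℕ) :
    (∃ w : Z2, z = a + 2 ^ k * w) ↔ ‖z - a‖ ≤ (1/2:ℝ)^k := by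
  have h2 : ((1:ℝ)/2)^k = (2:ℝ)^(-(k:ℤ)) := by
    rw [zpow_neg, zpow_natCast, one_div, inv_pow]
  rw [h2]
  have := PadicInt.norm_le_pow_iff_mem_span_pow (z - a) k
  push_cast at this
  rw [this, Ideal.mem_span_singleton]
  constructor
  · rintro ⟨w, rfl⟩; exact ⟨w, by ring⟩
  · rintro ⟨w, hw⟩; exact ⟨w, by linear_combination hw⟩

/-- The point `c_k ∈ ℤ₂ × ℤ₂` determined by sequences `α, β` of `±1`'s:
`c₁ = (0,0)` and `c_k = (∑_{n=0}^{k-2} α_n 2ⁿ, ∑_{n=0}^{k-2} β_n 2ⁿ)` for `k ≥ 2`. -/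
def cSeq (α β : ℕ → ℤ) (k : ℕ) : Z2sq :=
  (∑ n ∈ Finset.range (k - 1), (α n : Z2) * 2 ^ n,
   ∑ n ∈ Finset.range (k - 1), (β n : Z2) * 2 ^ n)

/-- The limit point `c = (∑_{n=0}^∞ α_n 2ⁿ, ∑_{n=0}^∞ β_n 2ⁿ)`. -/
def cLim (α β : ℕ → ℤ) : Z2sq :=
  (∑' n : ℕ, (α n : Z2) * 2 ^ n, ∑' n : ℕ, (β n : Z2) * 2 ^ n)

/-- The window `W = ⋃_{k ≥ 1} (c_k + 2^k (ℤ₂ × ℤ₂))` of the Robinson square tilings. -/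
def RobinsonWindow (α β : ℕ → ℤ) : Set Z2sq :=
  ⋃ (k : ℕ) (_ : 1 ≤ k), {z : Z2sq | ∃ w : Z2sq, z = cSeq α β k + 2 ^ k * w}

section Main
variable (α β : ℕ → ℤ)

/-- Membership in the `k`-th ball. -/
lemma mem_ball_iff (k : ℕ) (z : Z2sq) :
    (∃ w : Z2sq, z = cSeq α β k + 2 ^ k * w) ↔ dist z (cSeq α β k) ≤ (1/2:ℝ)^k := by
  rw [Prod.dist_eq, max_le_iff, dist_eq_norm, dist_eq_norm,
    ← exists_iff_norm_le (cSeq α β k).1 z.1 k, ← exists_iff_norm_le (cSeq α β k).2 z.2 k]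
  constructor
  · rintro ⟨w, rfl⟩
    exact ⟨⟨w.1, rfl⟩, ⟨w.2, rfl⟩⟩
  · rintro ⟨⟨w1, h1⟩, ⟨w2, h2⟩⟩
    refine ⟨(w1, w2), ?_⟩
    ext
    · exact h1
    · exact h2

variable (hα : ∀ n, α n = 1 ∨ α n = -1) (hβ : ∀ n, β n = 1 ∨ β n = -1)
include hα hβ

lemma dist_cLim_cSeq (k : ℕ) :
    dist (cLim α β) (cSeq α β k) = (1/2:ℝ)^(k-1) := by
  rw [Prod.dist_eq, dist_eq_norm, dist_eq_norm]
  simp only [cLim, cSeq]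
  rw [tail_norm α hα (k-1), tail_norm β hβ (k-1), max_self]

lemma cLim_not_mem : cLim α β ∉ RobinsonWindow α β := by
  intro hmem
  rw [RobinsonWindow, Set.mem_iUnion₂] at hmem
  obtain ⟨k, hk, hw⟩ := hmem
  rw [Set.mem_setOf_eq, mem_ball_iff, dist_cLim_cSeq α β hα hβ] at hw
  have : (k:ℤ) - 1 < k := by omega
  have hlt : (1/2:ℝ)^k < (1/2:ℝ)^(k-1) := by
    apply pow_lt_pow_right_of_lt_one₀ (by norm_num) (by norm_num)
    omega
  linarith

omit hα hβ in
lemma ballSet_eq (k : ℕ) :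
    {z : Z2sq | ∃ w : Z2sq, z = cSeq α β k + 2 ^ k * w}
      = closedBall (cSeq α β k) ((1/2:ℝ)^k) :=
  Set.ext fun z => by rw [Set.mem_setOf_eq, mem_ball_iff, mem_closedBall]

omit hα hβ in
lemma window_isOpen : IsOpen (RobinsonWindow α β) := by
  apply isOpen_iUnion; intro k; apply isOpen_iUnion; intro _
  rw [ballSet_eq]
  have h0 : ((1/2:ℝ)^k) ≠ 0 := by positivity
  rcases (cSeq α β k) with ⟨a, b⟩
  rw [← closedBall_prod_same]
  exact (IsUltrametricDist.isOpen_closedBall a h0).prod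
    (IsUltrametricDist.isOpen_closedBall b h0)

lemma cLim_mem_closure : cLim α β ∈ closure (RobinsonWindow α β) := by
  refine mem_closure_of_tendsto (f := fun k : ℕ => cSeq α β (k+1)) (b := atTop) ?_ ?_
  · rw [tendsto_iff_dist_tendsto_zero]
    have h : ∀ k : ℕ, dist (cSeq α β (k+1)) (cLim α β) = (1/2:ℝ)^k := by
      intro k
      rw [dist_comm, dist_cLim_cSeq α β hα hβ, Nat.add_sub_cancel]
    simp only [h]
    exact tendsto_pow_atTop_nhds_zero_of_lt_one (by norm_num) (by norm_num)
  · filter_upwards with k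
    rw [RobinsonWindow, Set.mem_iUnion₂]
    exact ⟨k+1, by omega, 0, by ring⟩

lemma closure_window :
    closure (RobinsonWindow α β) = RobinsonWindow α β ∪ {cLim α β} := by
  apply Set.Subset.antisymm
  · intro z hz
    by_contra hcon
    simp only [Set.mem_union, Set.mem_singleton_iff, not_or] at hcon
    obtain ⟨hzW, hzc⟩ := hcon
    have hd : 0 < dist z (cLim α β) := dist_pos.2 hzc
    set d := dist z (cLim α β) with hdd
    obtain ⟨N, hN⟩ : ∃ N : ℕ, (1/2:ℝ)^N < d/4 :=
      exists_pow_lt_of_lt_one (by positivity) (by norm_num)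
    set F : Set Z2sq := ⋃ k ∈ Finset.Icc 1 N,
      {z : Z2sq | ∃ w : Z2sq, z = cSeq α β k + 2 ^ k * w} with hF
    have hFclosed : IsClosed F := by
      apply Set.Finite.isClosed_biUnion (Finset.Icc 1 N).finite_toSet
      intro k _
      rw [ballSet_eq]
      exact isClosed_closedBall
    have hzF : z ∉ F := by
      intro hzF
      rw [hF, Set.mem_iUnion₂] at hzF
      obtain ⟨k, hk, hw⟩ := hzF
      refine hzW ?_
      rw [RobinsonWindow, Set.mem_iUnion₂]
      exact ⟨k, (Finset.mem_Icc.mp hk).1, hw⟩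
    obtain ⟨r1, hr1, hball⟩ := Metric.isOpen_iff.mp hFclosed.isOpen_compl z hzF
    set ε := min r1 (d/4) with hε
    have hεpos : 0 < ε := lt_min hr1 (by positivity)
    obtain ⟨y, hyW, hdzy⟩ := Metric.mem_closure_iff.mp hz ε hεpos
    rw [RobinsonWindow, Set.mem_iUnion₂] at hyW
    obtain ⟨k, hk1, hyk⟩ := hyW
    rcases le_or_gt k N with hkN | hkN
    · have hyF : y ∈ F := by
        rw [hF, Set.mem_iUnion₂]
        exact ⟨k, Finset.mem_Icc.mpr ⟨hk1, hkN⟩, hyk⟩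
      have : y ∈ ball z r1 := by
        rw [mem_ball, dist_comm]
        exact hdzy.trans_le (min_le_left _ _)
      exact hball this hyF
    · have h1 : dist y (cSeq α β k) ≤ (1/2:ℝ)^k := (mem_ball_iff α β k y).mp hyk
      have h2 : dist (cSeq α β k) (cLim α β) = (1/2:ℝ)^(k-1) := by
        rw [dist_comm]; exact dist_cLim_cSeq α β hα hβ k
      have h3 : dist y (cLim α β) ≤ (1/2:ℝ)^k + (1/2:ℝ)^(k-1) :=
        (dist_triangle y (cSeq α β k) (cLim α β)).trans (by rw [h2]; gcongr)
      have h4 : (1/2:ℝ)^k ≤ (1/2:ℝ)^N :=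
        pow_le_pow_of_le_one (by norm_num) (by norm_num) (by omega)
      have h5 : (1/2:ℝ)^(k-1) ≤ (1/2:ℝ)^N :=
        pow_le_pow_of_le_one (by norm_num) (by norm_num) (by omega)
      have h6 : d ≤ dist z y + dist y (cLim α β) := dist_triangle z y (cLim α β)
      have h7 : dist z y < d/4 := hdzy.trans_le (min_le_right _ _)
      linarith
  · rw [Set.union_subset_iff, Set.singleton_subset_iff]
    exact ⟨subset_closure, cLim_mem_closure α β hα hβ⟩

lemma frontier_window :
    frontier (RobinsonWindow α β) = {cLim α β} := by
  rw [frontier, closure_window α β hα hβ, (window_isOpen α β).interior_eq,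
    Set.union_diff_left]
  ext x
  simp only [Set.mem_diff, Set.mem_singleton_iff]
  constructor
  · rintro ⟨hx, _⟩; exact hx
  · rintro rfl; exact ⟨rfl, cLim_not_mem α β hα hβ⟩

end Main

instance : NeBot (𝓝[≠] (0 : Z2sq)) := by
  have htend : Tendsto (fun n : ℕ => (((2:Z2)^n, 0) : Z2sq)) atTop (𝓝[≠] (0 : Z2sq)) := by
    apply tendsto_nhdsWithin_of_tendsto_nhds_of_eventually_within
    · have h2 : Tendsto (fun n : ℕ => (2:Z2)^n) atTop (𝓝 0) := by
        rw [tendsto_zero_iff_norm_tendsto_zero]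
        simp only [norm_pow, norm_two_Z2]
        exact tendsto_pow_atTop_nhds_zero_of_lt_one (by norm_num) (by norm_num)
      exact h2.prodMk_nhds tendsto_const_nhds
    · filter_upwards with n
      simp only [Set.mem_compl_iff, Set.mem_singleton_iff, Prod.mk_eq_zero, not_and]
      intro h
      exact absurd h (pow_ne_zero n two_ne_zero)
  exact neBot_of_le htend

/-- the window `W = ⋃_{k ≥ 1} (c_k + 2^k(ℤ₂ × ℤ₂))` is open, does not
contain `c`, has closure `W ∪ {c}` and boundary exactly `{c}`; in particular the
boundary of `W` has Haar measure zero. -/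
theorem robinsonWindow_isOpen_closure_frontier
    (α β : ℕ → ℤ) (hα : ∀ n, α n = 1 ∨ α n = -1) (hβ : ∀ n, β n = 1 ∨ β n = -1)
    [MeasurableSpace Z2sq] [BorelSpace Z2sq]
    (μ : Measure Z2sq) [μ.IsAddHaarMeasure] :
    IsOpen (RobinsonWindow α β) ∧
    cLim α β ∉ RobinsonWindow α β ∧
    closure (RobinsonWindow α β) = RobinsonWindow α β ∪ {cLim α β} ∧
    frontier (RobinsonWindow α β) = {cLim α β} ∧
    μ (frontier (RobinsonWindow α β)) = 0 := by
  refine ⟨window_isOpen α β, cLim_not_mem α β hα hβ, closure_window α β hα hβ,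
    frontier_window α β hα hβ, ?_⟩
  rw [frontier_window α β hα hβ]
  exact measure_singleton _
end
end
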